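/- arXiv:1508.04505 — 8 statements merged into one kernel-verified Lean document; each statement's English description precedes it below -/
import Mathlib

section
/- Let λ > 0, and let ρ̄: [0,∞) → [0,∞) be a smooth non-decreasing function with ρ̄(s) > 0 for all s > 0. Then for all real v ≥ 0 and u ≥ 0, ρ̄(v)·(−λ·v + u) ≤ −(λ/2)·ρ̄(v)·v + ρ̄((2/λ)·u)·u. -/
theorem stmt0 (lam : ℝ) (hlam : 0 < lam) (ρ : ℝ → ℝ)
    (hρ_smooth : ContDiffOn ℝ (⊤ : ℕ∞) ρ (Set.Ici 0))
    (hρ_mono : MonotoneOn ρ (Set.Ici 0))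
    (hρ_nonneg : ∀ s, 0 ≤ s → 0 ≤ ρ s)
    (hρ_pos : ∀ s, 0 < s → 0 < ρ s)
    (v u : ℝ) (hv : 0 ≤ v) (hu : 0 ≤ u) :
    ρ v * (-lam * v + u) ≤ -(lam / 2) * (ρ v * v) + ρ ((2 / lam) * u) * u := by
  have hρv := hρ_nonneg v hv
  have h2u : (0:ℝ) ≤ (2 / lam) * u := by positivity
  have hρ2u := hρ_nonneg _ h2u
  by_cases h : u ≤ lam / 2 * v
  · nlinarith [mul_nonneg hρ2u hu, mul_le_mul_of_nonneg_left h hρv]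
  · have hvle : v ≤ (2 / lam) * u := by
      push_neg at h
      rw [div_mul_eq_mul_div, le_div_iff₀ hlam]
      nlinarith
    have := hρ_mono hv h2u hvle
    nlinarith [mul_le_mul_of_nonneg_right this hu, mul_nonneg hρv hv]
end

section
/- Let α₁ be a class K∞ function and ᾱ be a class K∞ function satisfying ᾱ(s) = O(α₁(s)) as s → 0⁺ (i.e., limsup_{s→0⁺} ᾱ(s)/α₁(s) < ∞). Then there exists a smooth non-decreasing function ρ̄ : [0,∞) → [0,∞) with ρ̄(s) > 0 for all s > 0 such that ρ̄(α₁(s))·α₁(s) ≥ ᾱ(s) for all s ≥ 0. -/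
/-- A class `K∞` function: continuous, strictly increasing on `[0,∞)`,
zero at zero, and unbounded. -/
def ClassKInf (f : ℝ → ℝ) : Prop :=
  ContinuousOn f (Set.Ici 0) ∧ StrictMonoOn f (Set.Ici 0) ∧ f 0 = 0 ∧
  Filter.Tendsto f Filter.atTop Filter.atTop

theorem stmt3 (α₁ ᾱ : ℝ → ℝ)
    (hα₁ : ClassKInf α₁) (hᾱ : ClassKInf ᾱ)
    -- ᾱ(s) = O(α₁(s)) as s → 0⁺, i.e. limsup_{s→0⁺} ᾱ(s)/α₁(s) < ∞
    (hO : ∃ C : ℝ, ∀ᶠ s in nhdsWithin 0 (Set.Ioi 0), ᾱ s / α₁ s ≤ C) :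
    ∃ ρ : ℝ → ℝ, ContDiffOn ℝ (⊤ : ℕ∞) ρ (Set.Ici 0) ∧ MonotoneOn ρ (Set.Ici 0) ∧
      (∀ s, 0 < s → 0 < ρ s) ∧ (∀ s, 0 ≤ s → 0 ≤ ρ s) ∧
      ∀ s, 0 ≤ s → ᾱ s ≤ ρ (α₁ s) * α₁ s := by
  classical
  obtain ⟨hc1, hm1, hz1, ht1⟩ := hα₁
  obtain ⟨hc2, hm2, hz2, ht2⟩ := hᾱ
  have hα₁pos : ∀ s : ℝ, 0 < s → 0 < α₁ s := fun s hs => by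
    have := hm1 (Set.self_mem_Ici) (le_of_lt hs : (0:ℝ) ≤ s) hs
    rwa [hz1] at this
  have hᾱnn : ∀ s : ℝ, 0 ≤ s → 0 ≤ ᾱ s := fun s hs => by
    rcases eq_or_lt_of_le hs with h | h
    · rw [← h, hz2]
    · have := hm2 (Set.self_mem_Ici) (le_of_lt h : (0:ℝ) ≤ s) h
      rw [hz2] at this; exact this.le
  -- per-level bounds on the ratio
  have hB : ∀ N : ℕ, ∃ b : ℝ, ∀ s : ℝ, 0 < s → α₁ s ≤ (N : ℝ) + 1 → ᾱ s / α₁ s ≤ b := by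
    intro N
    obtain ⟨C, hC⟩ := hO
    rw [eventually_nhdsWithin_iff, Metric.eventually_nhds_iff] at hC
    obtain ⟨δ, hδ0, hδ⟩ := hC
    obtain ⟨M, hM1, hM2⟩ :=
      ((ht1.eventually_ge_atTop ((N : ℝ) + 1)).and
        (Filter.eventually_ge_atTop (max δ 1))).exists
    have hMδ : δ ≤ M := le_trans (le_max_left _ _) hM2
    have hM0 : (0:ℝ) ≤ M := le_trans (by positivity) (le_trans (le_max_right _ _) hM2)
    refine ⟨max C (ᾱ M / α₁ (δ / 2)), fun s hs hsN => ?_⟩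
    rcases lt_or_ge s δ with hlt | hge
    · refine le_trans (hδ (by rw [Real.dist_eq, sub_zero, abs_of_pos hs]; exact hlt)
        (Set.mem_Ioi.2 hs)) (le_max_left _ _)
    · have hsM : s ≤ M := by
        by_contra h
        push_neg at h
        have := hm1 (Set.mem_Ici.2 hM0) (Set.mem_Ici.2 (le_of_lt hs)) h
        linarith
      have h1 : ᾱ s ≤ ᾱ M := by
        rcases eq_or_lt_of_le hsM with h | h
        · rw [h]
        · exact (hm2 (Set.mem_Ici.2 hs.le) (Set.mem_Ici.2 hM0) h).le
      have h2 : α₁ (δ / 2) ≤ α₁ s := by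
        have : δ / 2 < s := by linarith
        exact (hm1 (Set.mem_Ici.2 (by positivity)) (Set.mem_Ici.2 hs.le) this).le
      have h3 : 0 < α₁ (δ / 2) := hα₁pos _ (by positivity)
      have h4 : 0 ≤ ᾱ M := hᾱnn M hM0
      exact le_trans (div_le_div₀ h4 h1 h3 h2) (le_max_right _ _)
  choose B hBspec using hB
  -- monotone sequence of bounds
  set A : ℕ → ℝ := fun N => 1 + ∑ k ∈ Finset.range (N + 1), max (B k) 0 with hAdef
  have hA1 : ∀ N, (1:ℝ) ≤ A N := by
    intro N
    have : (0:ℝ) ≤ ∑ k ∈ Finset.range (N + 1), max (B k) 0 :=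
      Finset.sum_nonneg (fun k _ => le_max_right _ _)
    simp only [hAdef]; linarith
  have hA0 : ∀ N, (0:ℝ) ≤ A N := fun N => le_trans zero_le_one (hA1 N)
  have hAB : ∀ N, B N ≤ A N := by
    intro N
    have h1 : max (B N) 0 ≤ ∑ k ∈ Finset.range (N + 1), max (B k) 0 :=
      Finset.single_le_sum (f := fun k => max (B k) 0)
        (fun k _ => le_max_right _ _) (Finset.self_mem_range_succ N)
    have h2 := le_max_left (B N) 0
    simp only [hAdef]; linarith
  have hAmono : Monotone A := by
    refine monotone_nat_of_le_succ (fun N => ?_)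
    simp only [hAdef, Finset.sum_range_succ]
    have := le_max_right (B (N + 1)) 0
    linarith
  -- exponents
  set q : ℕ → ℕ := fun N => Nat.clog 2 ⌈A N⌉₊ with hqdef
  set m : ℕ → ℕ := fun N => N + 2 * q N with hmdef
  have hq : ∀ N, A N ≤ 2 ^ q N := by
    intro N
    have h1 : A N ≤ (⌈A N⌉₊ : ℝ) := Nat.le_ceil _
    have h2 : (⌈A N⌉₊ : ℕ) ≤ 2 ^ q N := Nat.le_pow_clog one_lt_two _
    have h2' : ((⌈A N⌉₊ : ℕ) : ℝ) ≤ ((2:ℕ) ^ q N : ℕ) := Nat.cast_le.mpr h2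
    push_cast at h2'
    linarith
  have hqmono : Monotone q := fun a b hab =>
    Nat.clog_mono_right 2 (Nat.ceil_le_ceil (hAmono hab))
  have hmStrict : StrictMono m := by
    refine strictMono_nat_of_lt_succ (fun N => ?_)
    simp only [hmdef, Nat.succ_eq_add_one]
    have := hqmono (Nat.le_succ N)
    simp only [Nat.succ_eq_add_one] at this
    omega
  have hmge : ∀ N, N ≤ m N := fun N => Nat.le_add_right _ _
  -- coefficients
  set ε₁ : ℕ → ℝ := fun j =>
    if h : ∃ N, 2 ≤ N ∧ m N = j then A h.choose / (h.choose : ℝ) ^ j else 0 with hε₁def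
  set ε : ℕ → ℝ := fun j => (if j = 0 then A 1 else 0) + ε₁ j with hεdef
  have hε₁nn : ∀ j, 0 ≤ ε₁ j := by
    intro j
    simp only [hε₁def]
    split
    · exact div_nonneg (hA0 _) (pow_nonneg (Nat.cast_nonneg _) _)
    · exact le_rfl
  have hεnn : ∀ j, 0 ≤ ε j := by
    intro j
    simp only [hεdef]
    have := hε₁nn j
    split <;> [linarith [hA0 1]; linarith]
  have hε₁m : ∀ N, 2 ≤ N → ε₁ (m N) = A N / (N : ℝ) ^ m N := by
    intro N hN
    have hex : ∃ N', 2 ≤ N' ∧ m N' = m N := ⟨N, hN, rfl⟩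
    simp only [hε₁def]
    rw [dif_pos hex]
    have hspec := hex.choose_spec
    have : hex.choose = N := hmStrict.injective hspec.2
    rw [this]
  have hεm : ∀ N, 2 ≤ N → ε (m N) = A N / (N : ℝ) ^ m N := by
    intro N hN
    have hne : m N ≠ 0 := by have := hmge N; omega
    simp only [hεdef, if_neg hne, zero_add]
    exact hε₁m N hN
  have hε0 : ε 0 = A 1 := by
    have h1 : ε₁ 0 = 0 := by
      simp only [hε₁def]
      rw [dif_neg]
      rintro ⟨N, hN2, hN0⟩
      have := hmge N
      omega
    simp [hεdef, h1]
  -- summability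
  have hsum : ∀ r : ℝ, 0 ≤ r → Summable (fun j => ε j * r ^ j) := by
    intro r hr
    have hsplit : (fun j => ε j * r ^ j) =
        (fun j => (if j = 0 then A 1 else 0) * r ^ j) + (fun j => ε₁ j * r ^ j) := by
      funext j
      simp only [hεdef, Pi.add_apply]
      ring
    rw [hsplit]
    refine Summable.add ?_ ?_
    · refine summable_of_ne_finset_zero (s := {0}) (fun j hj => ?_)
      have : j ≠ 0 := by simpa using hj
      rw [if_neg this, zero_mul]
    · -- main part via injection on exponents
      set i : ℕ → ℕ := fun N => m (N + 2) with hidef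
      have hiinj : Function.Injective i := by
        intro a b hab
        have := hmStrict.injective hab
        omega
      have hvanish : ∀ j ∉ Set.range i, ε₁ j * r ^ j = 0 := by
        intro j hj
        simp only [hε₁def]
        rw [dif_neg, zero_mul]
        rintro ⟨N, hN2, hNj⟩
        exact hj ⟨N - 2, by simp only [hidef]; rw [Nat.sub_add_cancel hN2]; exact hNj⟩
      rw [← Function.Injective.summable_iff hiinj hvanish]
      -- summability of the composed sequence
      have hcomp : ∀ N : ℕ, (fun j => ε₁ j * r ^ j) (i N) =
          A (N + 2) / ((N + 2 : ℕ) : ℝ) ^ m (N + 2) * r ^ m (N + 2) := by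
        intro N
        have h2' : (2:ℕ) ≤ N + 2 := by omega
        simp only [hidef, hε₁m (N + 2) h2']
      set K : ℕ := Nat.ceil (2 * r) with hKdef
      rw [← summable_nat_add_iff K]
      have key : ∀ N : ℕ, (fun j => ε₁ j * r ^ j) (i (N + K)) ≤ (1 / 2 : ℝ) ^ N := by
        intro N
        rw [hcomp]
        set n : ℕ := N + K + 2 with hndef
        have hn0 : (0:ℝ) < (n : ℕ) := by positivity
        have hrn : r / n ≤ 1 / 2 := by
          have h1 : 2 * r ≤ (K : ℝ) := Nat.le_ceil _
          have h2 : (K : ℝ) ≤ (n : ℝ) := by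
            simp only [hndef]; push_cast; linarith [Nat.cast_nonneg (α := ℝ) N]
          rw [div_le_div_iff₀ hn0 (by norm_num)]
          linarith
        have hrn0 : 0 ≤ r / n := div_nonneg hr hn0.le
        have heq : A n / (n : ℝ) ^ m n * r ^ m n = A n * (r / n) ^ m n := by
          rw [div_pow]; ring
        rw [heq]
        have h1 : (r / n) ^ m n ≤ (1 / 2 : ℝ) ^ m n := pow_le_pow_left₀ hrn0 hrn _
        have h2 : A n * (r / n) ^ m n ≤ (2:ℝ) ^ q n * (1 / 2) ^ m n := by
          refine mul_le_mul (hq n) h1 (pow_nonneg hrn0 _) (by positivity)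
        refine le_trans h2 ?_
        have : (2:ℝ) ^ q n * (1 / 2) ^ m n = (1 / 2 : ℝ) ^ n * (1 / 2) ^ q n := by
          simp only [hmdef]
          rw [pow_add, two_mul, pow_add]
          have h22 : (2:ℝ) ^ q n * (1 / 2) ^ q n = 1 := by rw [← mul_pow]; norm_num
          linear_combination (1 / 2 : ℝ) ^ n * (1 / 2) ^ q n * h22
        rw [this]
        have h3 : (1 / 2 : ℝ) ^ q n ≤ 1 := pow_le_one₀ (by norm_num) (by norm_num)
        have h4 : (1 / 2 : ℝ) ^ n ≤ (1 / 2 : ℝ) ^ N :=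
          pow_le_pow_of_le_one (by norm_num) (by norm_num) (by omega)
        calc (1 / 2 : ℝ) ^ n * (1 / 2) ^ q n ≤ (1 / 2 : ℝ) ^ n * 1 := by
              refine mul_le_mul_of_nonneg_left h3 (by positivity)
          _ = (1 / 2 : ℝ) ^ n := mul_one _
          _ ≤ (1 / 2 : ℝ) ^ N := h4
      refine Summable.of_nonneg_of_le (fun N => ?_) (fun N => key N)
        (summable_geometric_of_lt_one (by norm_num) (by norm_num))
      exact mul_nonneg (hε₁nn _) (pow_nonneg hr _)
  -- the function
  set ρ : ℝ → ℝ := fun x => ∑' n : ℕ, ε n * x ^ n with hρdef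
  have hterm_le : ∀ r : ℝ, 0 ≤ r → ∀ j, ε j * r ^ j ≤ ρ r := by
    intro r hr j
    exact Summable.le_tsum (hsum r hr) j (fun i _ => mul_nonneg (hεnn i) (pow_nonneg hr i))
  have hρ_ge_A1 : ∀ r : ℝ, 0 ≤ r → A 1 ≤ ρ r := by
    intro r hr
    have := hterm_le r hr 0
    rwa [hε0, pow_zero, mul_one] at this
  have hρ_ge : ∀ N : ℕ, 2 ≤ N → ∀ r : ℝ, (N : ℝ) ≤ r → A N ≤ ρ r := by
    intro N hN r hr
    have hN0 : (0:ℝ) < (N : ℝ) := by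
      have : (2:ℝ) ≤ (N:ℝ) := by exact_mod_cast hN
      linarith
    have hr0 : (0:ℝ) ≤ r := le_trans hN0.le hr
    have h1 := hterm_le r hr0 (m N)
    rw [hεm N hN] at h1
    have h2 : (N : ℝ) ^ m N ≤ r ^ m N := pow_le_pow_left₀ hN0.le hr _
    have h3 : A N = A N / (N : ℝ) ^ m N * (N : ℝ) ^ m N := by
      field_simp
    calc A N = A N / (N : ℝ) ^ m N * (N : ℝ) ^ m N := h3
      _ ≤ A N / (N : ℝ) ^ m N * r ^ m N := by
          refine mul_le_mul_of_nonneg_left h2 ?_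
          exact div_nonneg (hA0 N) (pow_nonneg hN0.le _)
      _ ≤ ρ r := h1
  have hρmono : MonotoneOn ρ (Set.Ici 0) := by
    intro r hr r' hr' hrr'
    simp only [Set.mem_Ici] at hr hr'
    exact Summable.tsum_le_tsum
      (fun j => mul_le_mul_of_nonneg_left (pow_le_pow_left₀ hr hrr' j) (hεnn j))
      (hsum r hr) (hsum r' hr')
  -- analyticity
  have hρeq : (FormalMultilinearSeries.ofScalars ℝ ε).sum = ρ := by
    funext x
    have := FormalMultilinearSeries.ofScalars_sum_eq ε x
    simp only [FormalMultilinearSeries.ofScalarsSum] at this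
    rw [this, hρdef]
    simp [smul_eq_mul]
  have hrad : (FormalMultilinearSeries.ofScalars ℝ ε).radius = ⊤ := by
    refine ENNReal.eq_top_of_forall_nnreal_le (fun r => ?_)
    refine FormalMultilinearSeries.le_radius_of_summable_norm _ ?_
    have : ∀ n, ‖FormalMultilinearSeries.ofScalars ℝ ε n‖ * (r:ℝ) ^ n = ε n * (r:ℝ) ^ n := by
      intro n
      rw [FormalMultilinearSeries.ofScalars_norm, Real.norm_eq_abs, abs_of_nonneg (hεnn n)]
    simp_rw [this]
    exact hsum r r.coe_nonneg
  have hanal : AnalyticOnNhd ℝ ρ (Set.Ici 0) := by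
    have h0 : 0 < (FormalMultilinearSeries.ofScalars ℝ ε).radius := by
      rw [hrad]; exact ENNReal.zero_lt_top
    have hball := (FormalMultilinearSeries.ofScalars ℝ ε).hasFPowerSeriesOnBall h0
    rw [hρeq] at hball
    have := hball.analyticOnNhd
    rw [hrad] at this
    refine AnalyticOnNhd.mono this (fun x _ => ?_)
    simp [EMetric.mem_ball, edist_lt_top]
  have hsmooth : ContDiffOn ℝ (⊤ : ℕ∞) ρ (Set.Ici 0) :=
    hanal.contDiffOn (uniqueDiffOn_Ici 0)
  refine ⟨ρ, hsmooth, hρmono, ?_, ?_, ?_⟩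
  · intro s hs
    have := hρ_ge_A1 s hs.le
    linarith [hA1 1]
  · intro s hs
    have := hρ_ge_A1 s hs
    linarith [hA1 1]
  · intro s hs
    rcases eq_or_lt_of_le hs with h | h
    · rw [← h, hz1, hz2, mul_zero]
    · set r : ℝ := α₁ s with hrdef
      have hr : 0 < r := hα₁pos s h
      set N : ℕ := Nat.floor r with hNdef
      have hN1 : (N : ℝ) ≤ r := Nat.floor_le hr.le
      have hN2 : r < N + 1 := Nat.lt_floor_add_one r
      have hratio : ᾱ s / α₁ s ≤ B N := hBspec N s h (by rw [← hrdef]; linarith)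
      have hρr : A N ≤ ρ r := by
        rcases le_or_gt 2 N with hN | hN
        · exact hρ_ge N hN r hN1
        · have hle : A N ≤ A 1 := hAmono (by omega)
          exact le_trans hle (hρ_ge_A1 r hr.le)
      have hfinal : ᾱ s / α₁ s ≤ ρ r := le_trans hratio (le_trans (hAB N) hρr)
      calc ᾱ s = (ᾱ s / α₁ s) * α₁ s := (div_mul_cancel₀ _ hr.ne').symm
        _ ≤ ρ (α₁ s) * α₁ s := mul_le_mul_of_nonneg_right hfinal hr.le
end

section
/- Let α₁ be a class K∞ function with limsup_{s→0⁺} s²/α₁(s) < ∞, and let α̂ : ℝⁿ → [0,∞) be a continuous positive definite function bounded above by a class K∞ function of the norm that is O(s²) as s → 0⁺. Then there exists a class K∞ function α̃ with α̃(s) = O(α₁(s)) as s → 0⁺ and α̃(‖x‖) ≥ α̂(x) for all x ∈ ℝⁿ. -/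
theorem stmt4 {n : ℕ} (α₁ : ℝ → ℝ) (hα₁ : ClassKInf α₁)
    -- limsup_{s→0⁺} s²/α₁(s) < ∞
    (hgrowth : ∃ C : ℝ, ∀ᶠ s in nhdsWithin 0 (Set.Ioi 0), s ^ 2 / α₁ s ≤ C)
    (αhat : EuclideanSpace ℝ (Fin n) → ℝ)
    (hαhat_cont : Continuous αhat) (hαhat0 : αhat 0 = 0)
    (hαhat_pos : ∀ x, x ≠ 0 → 0 < αhat x)
    -- αhat is bounded above by a class K∞ function of the norm that is O(s²) near 0⁺
    (hdom : ∃ g : ℝ → ℝ, ClassKInf g ∧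
      (∃ C : ℝ, ∀ᶠ s in nhdsWithin 0 (Set.Ioi 0), g s / s ^ 2 ≤ C) ∧
      ∀ x, αhat x ≤ g ‖x‖) :
    ∃ αtil : ℝ → ℝ, ClassKInf αtil ∧
      (∃ C : ℝ, ∀ᶠ s in nhdsWithin 0 (Set.Ioi 0), αtil s / α₁ s ≤ C) ∧
      ∀ x, αhat x ≤ αtil ‖x‖ := by
  obtain ⟨g, hg, ⟨C₁, hC₁⟩, hgd⟩ := hdom
  obtain ⟨C₂, hC₂⟩ := hgrowth
  refine ⟨g, hg, ⟨max C₁ 0 * max C₂ 0, ?_⟩, hgd⟩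
  have hmem : ∀ᶠ s in nhdsWithin 0 (Set.Ioi 0), s ∈ Set.Ioi (0:ℝ) :=
    eventually_mem_nhdsWithin
  filter_upwards [hC₁, hC₂, hmem] with s h1 h2 hs
  have hs0 : (0:ℝ) < s := hs
  have hα₁pos : 0 < α₁ s := by
    have := hα₁.2.1 (Set.self_mem_Ici) (Set.mem_Ici.2 hs0.le) hs0
    rwa [hα₁.2.2.1] at this
  have hsq : (0:ℝ) < s ^ 2 := by positivity
  have key : g s / α₁ s = (g s / s ^ 2) * (s ^ 2 / α₁ s) := by
    field_simp
  rw [key]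
  have h1' : g s / s ^ 2 ≤ max C₁ 0 := h1.trans (le_max_left _ _)
  have h2' : s ^ 2 / α₁ s ≤ max C₂ 0 := h2.trans (le_max_left _ _)
  have hnn : 0 ≤ s ^ 2 / α₁ s := by positivity
  exact mul_le_mul h1' h2' hnn (le_max_right _ _)
end

section
/- Suppose V : ℝⁿ × [t₀,∞) → [0,∞) is C¹ and along solutions of ẋ = f(x,u,d(t)) satisfies V̇ ≤ −λV + β(u) for a constant λ > 0, where α₁(‖x‖) ≤ V(x,t) ≤ α₂(‖x‖) for class K∞ functions α₁, α₂ and β is a smooth positive definite function. Then for any smooth non-decreasing ρ̄ with ρ̄(s) > 0 for s > 0, the function V̄(x,t) = ∫₀^{V(x,t)} ρ̄(s) ds satisfies, along the same solutions, V̄̇ ≤ −(λ/2)·V̄ + β̄(u) for any smooth positive definite function β̄ with β̄(u) ≥ ρ̄((2/λ)β(u))·β(u), and ᾱ₁(‖x‖) ≤ V̄(x,t) ≤ ᾱ₂(‖x‖) for some class K∞ functions ᾱ₁, ᾱ₂. -/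
/-- A smooth positive definite function. -/
def SmoothPosDef {E : Type*} [NormedAddCommGroup E] [NormedSpace ℝ E]
    (β : E → ℝ) : Prop :=
  ContDiff ℝ (⊤ : ℕ∞) β ∧ β 0 = 0 ∧ ∀ u, u ≠ 0 → 0 < β u

open Filter intervalIntegral in
theorem stmt5 {n m nd : ℕ}
    (𝔻 : Set (EuclideanSpace ℝ (Fin nd)))
    (f : EuclideanSpace ℝ (Fin n) → EuclideanSpace ℝ (Fin m) →
      EuclideanSpace ℝ (Fin nd) → EuclideanSpace ℝ (Fin n))
    (V : EuclideanSpace ℝ (Fin n) × ℝ → ℝ)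
    (hV_C1 : ContDiff ℝ 1 V)
    (α₁ α₂ : ℝ → ℝ) (hα₁ : ClassKInf α₁) (hα₂ : ClassKInf α₂)
    (hsandwich : ∀ x t, α₁ ‖x‖ ≤ V (x, t) ∧ V (x, t) ≤ α₂ ‖x‖)
    (lam : ℝ) (hlam : 0 < lam)
    (β : EuclideanSpace ℝ (Fin m) → ℝ) (hβ : SmoothPosDef β)
    (hdecay : ∀ x t u d, d ∈ 𝔻 →
      fderiv ℝ V (x, t) (f x u d, 1) ≤ -lam * V (x, t) + β u)
    (ρ : ℝ → ℝ) (hρ_smooth : ContDiffOn ℝ (⊤ : ℕ∞) ρ (Set.Ici 0))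
    (hρ_mono : MonotoneOn ρ (Set.Ici 0)) (hρ_pos : ∀ s, 0 < s → 0 < ρ s)
    (βbar : EuclideanSpace ℝ (Fin m) → ℝ) (hβbar : SmoothPosDef βbar)
    (hβbar_ge : ∀ u, ρ ((2 / lam) * β u) * β u ≤ βbar u) :
    (∀ x t u d, d ∈ 𝔻 →
      fderiv ℝ (fun p => ∫ s in (0:ℝ)..(V p), ρ s) (x, t) (f x u d, 1) ≤
        -(lam / 2) * (∫ s in (0:ℝ)..(V (x, t)), ρ s) + βbar u) ∧
    ∃ ᾱ₁ ᾱ₂ : ℝ → ℝ, ClassKInf ᾱ₁ ∧ ClassKInf ᾱ₂ ∧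
      ∀ x t, ᾱ₁ ‖x‖ ≤ (∫ s in (0:ℝ)..(V (x, t)), ρ s) ∧
        (∫ s in (0:ℝ)..(V (x, t)), ρ s) ≤ ᾱ₂ ‖x‖ := by
  -- nonnegativity facts
  have hα₁0 : ∀ r : ℝ, 0 ≤ r → 0 ≤ α₁ r := fun r hr => by
    rw [← hα₁.2.2.1]
    exact hα₁.2.1.monotoneOn Set.self_mem_Ici hr hr
  have hα₂0 : ∀ r : ℝ, 0 ≤ r → 0 ≤ α₂ r := fun r hr => by
    rw [← hα₂.2.2.1]
    exact hα₂.2.1.monotoneOn Set.self_mem_Ici hr hr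
  have hVnn : ∀ p : EuclideanSpace ℝ (Fin n) × ℝ, 0 ≤ V p := fun p =>
    le_trans (hα₁0 _ (norm_nonneg _)) ((hsandwich p.1 p.2).1.trans_eq (by rfl))
  -- ρ at 0 is nonnegative
  have hρ0 : 0 ≤ ρ 0 := by
    have hc : ContinuousWithinAt ρ (Set.Ioi 0) 0 :=
      ((hρ_smooth.continuousOn) 0 Set.self_mem_Ici).mono (Set.Ioi_subset_Ici le_rfl)
    exact ge_of_tendsto hc (eventually_nhdsWithin_of_forall fun s hs => (hρ_pos s hs).le)
  have hρnn : ∀ s : ℝ, 0 ≤ s → 0 ≤ ρ s := fun s hs => by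
    rcases eq_or_lt_of_le hs with h | h
    · rw [← h]; exact hρ0
    · exact (hρ_pos s h).le
  -- the extended integrand
  set ρ' : ℝ → ℝ := fun s => ρ (max s 0) with hρ'def
  have hρ'c : Continuous ρ' :=
    hρ_smooth.continuousOn.comp_continuous (continuous_id.max continuous_const)
      fun s => Set.mem_Ici.mpr (le_max_right _ _)
  have hρ'mono : Monotone ρ' := fun a b hab =>
    hρ_mono (Set.mem_Ici.mpr (le_max_right _ _)) (Set.mem_Ici.mpr (le_max_right _ _)) (max_le_max hab le_rfl)
  have hρ'nn : ∀ s, 0 ≤ ρ' s := fun s => hρnn _ (le_max_right _ _)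
  have hρ'eq : ∀ s : ℝ, 0 ≤ s → ρ' s = ρ s := fun s hs => by
    simp [hρ'def, max_eq_left hs]
  set g : ℝ → ℝ := fun s => ∫ t in (0:ℝ)..s, ρ' t with hgdef
  have hgderiv : ∀ s, HasDerivAt g (ρ' s) s := fun s =>
    intervalIntegral.integral_hasDerivAt_right (hρ'c.intervalIntegrable _ _)
      (hρ'c.stronglyMeasurable.stronglyMeasurableAtFilter) hρ'c.continuousAt
  have hgdiff : Differentiable ℝ g := fun s => (hgderiv s).differentiableAt
  have hgderiv' : ∀ s, deriv g s = ρ' s := fun s => (hgderiv s).deriv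
  have hg0 : g 0 = 0 := intervalIntegral.integral_same
  have hg_mono : Monotone g :=
    monotone_of_deriv_nonneg hgdiff fun s => by rw [hgderiv']; exact hρ'nn s
  have hg_smono : StrictMonoOn g (Set.Ici 0) := by
    apply strictMonoOn_of_deriv_pos (convex_Ici 0) hgdiff.continuous.continuousOn
    intro s hs
    rw [interior_Ici] at hs
    rw [hgderiv']
    rw [hρ'eq s (le_of_lt hs)]
    exact hρ_pos s hs
  -- the given integral equals g ∘ V
  have hfun : (fun p : EuclideanSpace ℝ (Fin n) × ℝ => ∫ s in (0:ℝ)..(V p), ρ s) = g ∘ V := by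
    funext p
    exact intervalIntegral.integral_congr fun s hs => by
      rw [Set.uIcc_of_le (hVnn p)] at hs
      exact (hρ'eq s hs.1).symm
  -- similarly for g at any nonnegative point
  have hgρ : ∀ w : ℝ, 0 ≤ w → g w = ∫ s in (0:ℝ)..w, ρ s := fun w hw =>
    intervalIntegral.integral_congr fun s hs => by
      rw [Set.uIcc_of_le hw] at hs
      exact hρ'eq s hs.1
  -- g s ≤ s * ρ' s for s ≥ 0
  have hg_le : ∀ s : ℝ, 0 ≤ s → g s ≤ s * ρ' s := by
    intro s hs
    calc g s ≤ ∫ _ in (0:ℝ)..s, ρ' s :=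
          intervalIntegral.integral_mono_on hs (hρ'c.intervalIntegrable _ _)
            intervalIntegrable_const fun t ht => hρ'mono ht.2
      _ = s * ρ' s := by simp [intervalIntegral.integral_const, smul_eq_mul]
  -- derivative of the composite
  have hVd : Differentiable ℝ V := hV_C1.differentiable one_ne_zero
  have hcomp : ∀ p, HasFDerivAt (g ∘ V) (ρ' (V p) • fderiv ℝ V p) p := fun p =>
    (hgderiv (V p)).comp_hasFDerivAt p (hVd p).hasFDerivAt
  -- unboundedness of g
  have hg_top : Filter.Tendsto g Filter.atTop Filter.atTop := by
    have hkey : ∀ s : ℝ, 1 ≤ s → g 1 + ρ' 1 * (s - 1) ≤ g s := by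
      intro s hs
      have hadd : (∫ t in (0:ℝ)..1, ρ' t) + ∫ t in (1:ℝ)..s, ρ' t = g s :=
        intervalIntegral.integral_add_adjacent_intervals
          (hρ'c.intervalIntegrable _ _) (hρ'c.intervalIntegrable _ _)
      have hmono : (∫ _ in (1:ℝ)..s, ρ' 1) ≤ ∫ t in (1:ℝ)..s, ρ' t :=
        intervalIntegral.integral_mono_on hs intervalIntegrable_const
          (hρ'c.intervalIntegrable _ _) fun t ht => hρ'mono ht.1
      have hconst : (∫ _ in (1:ℝ)..s, ρ' 1) = (s - 1) * ρ' 1 := by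
        simp [intervalIntegral.integral_const, smul_eq_mul]
      have : g 1 = ∫ t in (0:ℝ)..1, ρ' t := rfl
      nlinarith [hadd, hmono, hconst]
    have hρ'1 : 0 < ρ' 1 := by rw [hρ'eq 1 zero_le_one]; exact hρ_pos 1 one_pos
    have hlin : Filter.Tendsto (fun s : ℝ => g 1 + ρ' 1 * (s - 1)) Filter.atTop Filter.atTop := by
      apply Filter.tendsto_atTop_add_const_left
      exact (Filter.tendsto_atTop_add_const_right _ (-1) Filter.tendsto_id).const_mul_atTop hρ'1
        |>.congr (fun s => by simp only [id_eq]; ring)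
    exact Filter.tendsto_atTop_mono' _ ((Filter.eventually_ge_atTop 1).mono hkey) hlin
  constructor
  · -- the decay estimate
    intro x t u d hd
    rw [hfun, (hcomp (x, t)).fderiv]
    have hW : 0 ≤ V (x, t) := hVnn (x, t)
    set W := V (x, t) with hWdef
    set D := fderiv ℝ V (x, t) (f x u d, 1) with hDdef
    have hD : D ≤ -lam * W + β u := hdecay x t u d hd
    have hρW : 0 ≤ ρ' W := hρ'nn W
    have hgW : g W ≤ W * ρ' W := hg_le W hW
    have hβu : 0 ≤ β u := by
      rcases eq_or_ne u 0 with h | h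
      · rw [h, hβ.2.1]
      · exact (hβ.2.2 u h).le
    have hβbaru : 0 ≤ βbar u := by
      rcases eq_or_ne u 0 with h | h
      · rw [h, hβbar.2.1]
      · exact (hβbar.2.2 u h).le
    have hLHS : (ρ' W • fderiv ℝ V (x, t)) (f x u d, 1) = ρ' W * D := by
      simp [hDdef, smul_eq_mul]
    rw [hLHS, ← hgρ W hW]
    have h1 : ρ' W * D ≤ ρ' W * (-lam * W + β u) := mul_le_mul_of_nonneg_left hD hρW
    rcases le_or_gt ((2 / lam) * β u) W with hcase | hcase
    · -- β u ≤ (lam/2) W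
      have hb : β u ≤ (lam / 2) * W := by
        have := mul_le_mul_of_nonneg_left hcase (le_of_lt (half_pos hlam))
        calc β u = (lam / 2) * ((2 / lam) * β u) := by field_simp
          _ ≤ (lam / 2) * W := this
      nlinarith [mul_le_mul_of_nonneg_right hb hρW,
        mul_le_mul_of_nonneg_left hgW (le_of_lt (half_pos hlam))]
    · -- W < (2/lam) β u
      have hρle : ρ' W ≤ ρ ((2 / lam) * β u) := by
        rw [hρ'eq W hW]
        exact hρ_mono hW (hW.trans hcase.le) hcase.le
      have h2 : β u * ρ' W ≤ β u * ρ ((2 / lam) * β u) :=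
        mul_le_mul_of_nonneg_left hρle hβu
      have h3 : ρ ((2 / lam) * β u) * β u ≤ βbar u := hβbar_ge u
      nlinarith [mul_nonneg hW hρW,
        mul_le_mul_of_nonneg_left hgW (le_of_lt (half_pos hlam))]
  · -- the K∞ bounds
    refine ⟨g ∘ α₁, g ∘ α₂, ?_, ?_, ?_⟩
    · refine ⟨hgdiff.continuous.comp_continuousOn hα₁.1,
        hg_smono.comp hα₁.2.1 (fun r hr => hα₁0 r hr), ?_, hg_top.comp hα₁.2.2.2⟩
      simp [Function.comp, hα₁.2.2.1, hg0]
    · refine ⟨hgdiff.continuous.comp_continuousOn hα₂.1,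
        hg_smono.comp hα₂.2.1 (fun r hr => hα₂0 r hr), ?_, hg_top.comp hα₂.2.2.2⟩
      simp [Function.comp, hα₂.2.2.1, hg0]
    · intro x t
      have h := hsandwich x t
      rw [← hgρ _ (hVnn (x, t))]
      exact ⟨hg_mono h.1, hg_mono h.2⟩
end

section
/- Under the hypotheses of part (i), additionally let ᾱ be a class K∞ function with ᾱ(s) = O(α₁(s)) as s → 0⁺. Then there exists a smooth non-decreasing ρ̄ with ρ̄(s) > 0 for s > 0 such that V̄(x,t) = ∫₀^{V(x,t)} ρ̄(s) ds satisfies, for every 0 < λ̄ < λ/2 and c̄ = λ/2 − λ̄, the inequality V̄̇ ≤ −(λ̄·V̄ + c̄·ᾱ(‖x‖)) + β̄(u) along solutions, for some smooth positive definite β̄. -/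
open Real Filter Set


lemma normFc (dd : ℝ) (hdd : 0 ≤ dd) (M : ℕ) (n : ℕ) (z : ℂ) :
    ‖(dd : ℂ) * (z / (n + 1)) ^ M‖ = dd * (‖z‖ / (n + 1)) ^ M := by
  rw [norm_mul, norm_pow, norm_div, Complex.norm_real, Real.norm_eq_abs, abs_of_nonneg hdd]
  congr 3
  have : ((n : ℂ) + 1) = ((n + 1 : ℝ) : ℂ) := by push_cast; ring
  rw [this, Complex.norm_real, Real.norm_eq_abs, abs_of_nonneg (by positivity)]

lemma decay (dd : ℝ) (hdd : 1 ≤ dd) (R : ℝ) (hR : 0 ≤ R) (n : ℕ) (hn : 2 * R ≤ n) :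
    dd * (R / (n + 1)) ^ (2 * (n + ⌈dd⌉₊)) ≤ (1 / 2) ^ n := by
  set c := ⌈dd⌉₊ with hc
  have h1 : R / (n + 1) ≤ 1 / 2 := by
    rw [div_le_div_iff₀ (by positivity) (by norm_num)]
    linarith
  have h2 : (R / (n+1)) ^ (2 * (n + c)) ≤ (1/2 : ℝ) ^ (2 * (n + c)) :=
    pow_le_pow_left₀ (by positivity) h1 _
  have h3 : (1/2 : ℝ) ^ (2 * (n + c)) ≤ (1/2) ^ (n + c) :=
    pow_le_pow_of_le_one (by norm_num) (by norm_num) (by omega)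
  have h5 : dd * (1/2 : ℝ) ^ c ≤ 1 := by
    have hdc : dd ≤ (c : ℝ) := Nat.le_ceil dd
    have h2c : (c : ℝ) ≤ 2 ^ c := by
      exact_mod_cast (Nat.lt_two_pow_self (n := c)).le
    have hp : (1/2 : ℝ) ^ c = 1 / 2 ^ c := by
      rw [div_pow, one_pow]
    rw [hp]
    rw [mul_one_div, div_le_one (by positivity)]
    linarith
  have h6 : (0:ℝ) ≤ (1/2 : ℝ) ^ n := by positivity
  have h7 : dd * (R / (n+1)) ^ (2 * (n + c)) ≤ dd * (1/2) ^ (n + c) := by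
    have := le_trans h2 h3
    nlinarith
  rw [pow_add] at h7
  nlinarith

lemma construct (d : ℕ → ℝ) (hd : Monotone d) (hd0 : 1 ≤ d 0) :
    ∃ ρ : ℝ → ℝ, ContDiff ℝ (⊤ : ℕ∞) ρ ∧ MonotoneOn ρ (Set.Ici 0) ∧ (∀ w, 1 ≤ ρ w) ∧
      ∀ (n : ℕ) (w : ℝ), (n : ℝ) ≤ w → d n ≤ ρ w := by
  have hd1 : ∀ n, 1 ≤ d n := fun n => le_trans hd0 (hd (Nat.zero_le n))
  have hdnn : ∀ n, 0 ≤ d n := fun n => le_trans zero_le_one (hd1 n)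
  classical
  let k : ℕ → ℕ := fun n => n + ⌈d (n + 1)⌉₊
  let Fc : ℕ → ℂ → ℂ := fun n z => ((d (n + 1) : ℝ) : ℂ) * (z / (n + 1)) ^ (2 * k n)
  let u : ℝ → ℕ → ℝ := fun R n => d (n + 1) * (R / (n + 1)) ^ (2 * k n)
  have hnorm : ∀ (R : ℝ) (n : ℕ) (z : ℂ), ‖z‖ ≤ R → ‖Fc n z‖ ≤ u R n := by
    intro R n z hz
    show ‖((d (n + 1) : ℝ) : ℂ) * (z / (n + 1)) ^ (2 * k n)‖ ≤ d (n+1) * (R / (n + 1)) ^ (2 * k n)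
    rw [normFc _ (hdnn (n+1))]
    have h1 : (0:ℝ) < (n:ℝ) + 1 := by positivity
    gcongr <;> first | exact hdnn _ | exact norm_nonneg z | exact hz
  have husum : ∀ R : ℝ, 0 ≤ R → Summable (u R) := by
    intro R hR
    obtain ⟨N, hN⟩ := exists_nat_ge (2 * R)
    rw [← summable_nat_add_iff N]
    have hgeo : Summable (fun n : ℕ => (1/2:ℝ) ^ (n + N)) := by
      simpa [pow_add] using summable_geometric_two.mul_right ((1/2:ℝ)^N)
    refine Summable.of_nonneg_of_le (fun n => ?_) (fun n => ?_) hgeo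
    · show (0:ℝ) ≤ d ((n + N) + 1) * (R / ((n + N : ℕ) + 1)) ^ (2 * k (n + N))
      have := hdnn ((n+N)+1)
      positivity
    · show d ((n + N) + 1) * (R / ((n + N : ℕ) + 1)) ^ (2 * k (n + N)) ≤ (1/2:ℝ) ^ (n + N)
      have h2 : 2 * R ≤ ((n + N : ℕ) : ℝ) := by
        push_cast; linarith [Nat.cast_nonneg (α := ℝ) n]
      exact decay _ (hd1 _) R hR (n + N) h2
  -- the complex sum
  let G : ℂ → ℂ := fun z => ((d 0 : ℝ) : ℂ) + ∑' n, Fc n z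
  have hFdiff : ∀ n, Differentiable ℂ (Fc n) := fun n =>
    (differentiable_const _).mul ((differentiable_id.div_const _).pow _)
  have hGdiff : Differentiable ℂ G := by
    intro z
    have hball : DifferentiableOn ℂ (fun w : ℂ => ∑' n, Fc n w) (Metric.ball 0 (‖z‖ + 1)) := by
      refine Complex.differentiableOn_tsum_of_summable_norm (husum (‖z‖ + 1) (by positivity))
        (fun i => (hFdiff i).differentiableOn) Metric.isOpen_ball ?_
      intro i w hw
      rw [Metric.mem_ball, dist_zero_right] at hw
      exact hnorm _ i w hw.le
    have hmem : z ∈ Metric.ball (0:ℂ) (‖z‖ + 1) := by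
      rw [Metric.mem_ball, dist_zero_right]; exact lt_add_one _
    exact ((differentiableAt_const _).add
      (hball.differentiableAt (Metric.isOpen_ball.mem_nhds hmem)))
  -- analyticity of the real restriction
  have hGan : AnalyticOnNhd ℂ G Set.univ := hGdiff.differentiableOn.analyticOnNhd isOpen_univ
  let ρ : ℝ → ℝ := fun x => (G (x : ℂ)).re
  have hρan : ∀ x : ℝ, AnalyticAt ℝ ρ x := by
    intro x
    have h1 : AnalyticAt ℂ G (x : ℂ) := hGan _ (Set.mem_univ _)
    have h2 : AnalyticAt ℝ G (x : ℂ) := h1.restrictScalars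
    have h3 : AnalyticAt ℝ (fun y : ℝ => G (y : ℂ)) x :=
      h2.comp (Complex.ofRealCLM.analyticAt x)
    exact (Complex.reCLM.analyticAt _).comp h3
  have hρsmooth : ContDiff ℝ (⊤ : ℕ∞) ρ :=
    AnalyticOnNhd.contDiff (fun x _ => hρan x)
  -- summability of the complex and real termwise series
  have hcsum : ∀ z : ℂ, Summable (fun n => Fc n z) := fun z =>
    Summable.of_norm_bounded (husum _ (norm_nonneg z)) (fun n => hnorm _ n z le_rfl)
  have hre : ∀ (n : ℕ) (x : ℝ), (Fc n (x:ℂ)).re = d (n+1) * (x / (n+1)) ^ (2 * k n) := by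
    intro n x
    have : Fc n (x:ℂ) = ((d (n + 1) * (x / (n + 1)) ^ (2 * k n) : ℝ) : ℂ) := by
      show ((d (n + 1) : ℝ) : ℂ) * ((x:ℂ) / ((n:ℂ) + 1)) ^ (2 * k n) = _
      push_cast
      ring
    rw [this, Complex.ofReal_re]
  have hrsum : ∀ x : ℝ, Summable (fun n => d (n+1) * (x / (n+1)) ^ (2 * k n)) := by
    intro x
    have := (hcsum (x:ℂ)).map Complex.reCLM Complex.continuous_re
    exact this.congr (fun n => hre n x)
  have hval : ∀ x : ℝ, ρ x = d 0 + ∑' n, d (n+1) * (x / (n+1)) ^ (2 * k n) := by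
    intro x
    show (((d 0 : ℝ) : ℂ) + ∑' n, Fc n (x:ℂ)).re = _
    rw [Complex.add_re, Complex.ofReal_re, Complex.re_tsum (hcsum _)]
    congr 1
    exact tsum_congr (fun n => hre n x)
  have htermnn : ∀ (n : ℕ) (x : ℝ), 0 ≤ d (n+1) * (x / (n+1)) ^ (2 * k n) := by
    intro n x
    have h1 : (0:ℝ) ≤ (x / (n+1)) ^ (2 * k n) := (even_two_mul (k n)).pow_nonneg _
    exact mul_nonneg (hdnn _) h1
  refine ⟨ρ, hρsmooth, ?_, ?_, ?_⟩
  · -- monotone on Ici 0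
    intro x hx y hy hxy
    rw [hval x, hval y]
    refine add_le_add_right (Summable.tsum_le_tsum (fun n => ?_) (hrsum x) (hrsum y)) _
    have h1 : (0:ℝ) < (n:ℝ) + 1 := by positivity
    have hx0 : (0:ℝ) ≤ x := hx
    gcongr <;> first | exact hdnn _ | positivity | exact hxy
  · -- 1 ≤ ρ w
    intro w
    rw [hval w]
    have : 0 ≤ ∑' n, d (n+1) * (w / (n+1)) ^ (2 * k n) :=
      tsum_nonneg (fun n => htermnn n w)
    linarith [hd0]
  · -- d n ≤ ρ w for n ≤ w
    intro n w hnw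
    match n with
    | 0 =>
      rw [hval w]
      have : 0 ≤ ∑' n, d (n+1) * (w / (n+1)) ^ (2 * k n) :=
        tsum_nonneg (fun n => htermnn n w)
      linarith
    | (m+1) =>
      rw [hval w]
      have hw0 : (0:ℝ) ≤ w := le_trans (by positivity) hnw
      have hterm : d (m+1) ≤ d (m+1) * (w / (m+1)) ^ (2 * k m) := by
        have h1 : (1:ℝ) ≤ w / (m+1) := by
          rw [le_div_iff₀ (by positivity)]
          push_cast at hnw ⊢
          linarith
        nlinarith [one_le_pow₀ h1 (n := 2 * k m), hdnn (m+1)]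
      have hle : d (m+1) * (w / (m+1)) ^ (2 * k m) ≤ ∑' n, d (n+1) * (w / (n+1)) ^ (2 * k n) :=
        Summable.le_tsum (hrsum w) m (fun j _ => htermnn j w)
      linarith [hdnn 0]

lemma dseq_exists (α₁ ᾱ : ℝ → ℝ) (hα₁ : ContinuousOn α₁ (Set.Ici 0) ∧ StrictMonoOn α₁ (Set.Ici 0) ∧ α₁ 0 = 0 ∧
    Filter.Tendsto α₁ Filter.atTop Filter.atTop)
    (hᾱ : ContinuousOn ᾱ (Set.Ici 0) ∧ StrictMonoOn ᾱ (Set.Ici 0) ∧ ᾱ 0 = 0 ∧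
    Filter.Tendsto ᾱ Filter.atTop Filter.atTop)
    (hO : ∃ C : ℝ, ∀ᶠ s in nhdsWithin 0 (Set.Ioi 0), ᾱ s / α₁ s ≤ C) :
    ∃ d : ℕ → ℝ, Monotone d ∧ 1 ≤ d 0 ∧
      ∀ r : ℝ, 0 < r → ∀ nn : ℕ, α₁ r ≤ 2*(nn+1) → 2 * ᾱ r / α₁ r ≤ d nn := by
  obtain ⟨C, hC⟩ := hO
  rw [eventually_nhdsWithin_iff, Metric.eventually_nhds_iff] at hC
  obtain ⟨ε, hε, hCε⟩ := hC
  have hα₁pos : ∀ r : ℝ, 0 < r → 0 < α₁ r := by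
    intro r hr
    have := hα₁.2.1 (self_mem_Ici) (le_of_lt hr : (0:ℝ) ≤ r) hr
    rwa [hα₁.2.2.1] at this
  have hᾱnn : ∀ r : ℝ, 0 ≤ r → 0 ≤ ᾱ r := by
    intro r hr
    rcases eq_or_lt_of_le hr with h | h
    · rw [← h, hᾱ.2.2.1]
    · have := hᾱ.2.1 self_mem_Ici hr h
      rw [hᾱ.2.2.1] at this; exact this.le
  set S : ℕ → Set ℝ := fun nn => {y | ∃ r : ℝ, 0 < r ∧ α₁ r ≤ 2*(nn+1) ∧ y = 2 * ᾱ r / α₁ r}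
    with hS
  have hSnn : ∀ nn, ∀ y ∈ S nn, 0 ≤ y := by
    rintro nn y ⟨r, hr, _, rfl⟩
    have := hα₁pos r hr
    have := hᾱnn r hr.le
    positivity
  have hSbdd : ∀ nn, BddAbove (S nn) := by
    intro nn
    obtain ⟨R₀, hR₀⟩ := (hα₁.2.2.2.eventually_gt_atTop (2*(nn+1))).exists_forall_of_atTop
    set R : ℝ := max R₀ ε with hR
    have hKbdd : BddAbove (ᾱ '' Set.Icc ε R) :=
      (isCompact_Icc.image_of_continuousOn (hᾱ.1.mono (fun x hx => le_trans hε.le hx.1))).bddAbove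
    set K : ℝ := sSup (ᾱ '' Set.Icc ε R) with hK
    refine ⟨max (2*C) (2*K/α₁ ε), ?_⟩
    rintro y ⟨r, hr, hrle, rfl⟩
    have hrR : r ≤ R := by
      by_contra h
      push_neg at h
      have := hR₀ r (le_trans (le_max_left _ _) h.le)
      linarith
    rcases lt_or_ge r ε with h | h
    · have := hCε (by rwa [dist_zero_right, Real.norm_eq_abs, abs_of_pos hr]) hr
      calc 2 * ᾱ r / α₁ r = 2 * (ᾱ r / α₁ r) := by ring
        _ ≤ 2 * C := by linarith
        _ ≤ _ := le_max_left _ _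
    · have hmem : ᾱ r ∈ ᾱ '' Set.Icc ε R := ⟨r, ⟨h, hrR⟩, rfl⟩
      have hrK : ᾱ r ≤ K := le_csSup hKbdd hmem
      have hα₁ε : 0 < α₁ ε := hα₁pos ε hε
      have hα₁εr : α₁ ε ≤ α₁ r := by
        rcases eq_or_lt_of_le h with h' | h'
        · rw [h']
        · exact (hα₁.2.1 (le_of_lt hε : (0:ℝ) ≤ ε) (le_trans hε.le h) h').le
      calc 2 * ᾱ r / α₁ r ≤ 2 * K / α₁ ε := by
            apply div_le_div₀ (by nlinarith [hᾱnn r hr.le]) (by linarith) hα₁ε hα₁εr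
        _ ≤ _ := le_max_right _ _
  refine ⟨fun nn => 1 + sSup (S nn), ?_, ?_, ?_⟩
  · refine monotone_nat_of_le_succ (fun nn => ?_)
    have hsub : S nn ⊆ S (nn+1) := by
      rintro y ⟨r, hr, hrle, rfl⟩
      exact ⟨r, hr, by push_cast; push_cast at hrle; linarith, rfl⟩
    show 1 + sSup (S nn) ≤ 1 + sSup (S (nn+1))
    rcases Set.eq_empty_or_nonempty (S nn) with h | h
    · rw [h, Real.sSup_empty]
      linarith [Real.sSup_nonneg (hSnn (nn+1))]
    · exact add_le_add_right (csSup_le_csSup (hSbdd (nn+1)) h hsub) 1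
  · show (1:ℝ) ≤ 1 + sSup (S 0)
    linarith [Real.sSup_nonneg (hSnn 0)]
  · intro r hr nn hle
    have hmem : 2 * ᾱ r / α₁ r ∈ S nn := ⟨r, hr, hle, rfl⟩
    show 2 * ᾱ r / α₁ r ≤ 1 + sSup (S nn)
    linarith [le_csSup (hSbdd nn) hmem]

theorem stmt6 {n m nd : ℕ}
    (𝔻 : Set (EuclideanSpace ℝ (Fin nd)))
    (f : EuclideanSpace ℝ (Fin n) → EuclideanSpace ℝ (Fin m) →
      EuclideanSpace ℝ (Fin nd) → EuclideanSpace ℝ (Fin n))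
    (V : EuclideanSpace ℝ (Fin n) × ℝ → ℝ)
    (hV_C1 : ContDiff ℝ 1 V)
    (α₁ α₂ : ℝ → ℝ) (hα₁ : ClassKInf α₁) (hα₂ : ClassKInf α₂)
    (hsandwich : ∀ x t, α₁ ‖x‖ ≤ V (x, t) ∧ V (x, t) ≤ α₂ ‖x‖)
    (lam : ℝ) (hlam : 0 < lam)
    (β : EuclideanSpace ℝ (Fin m) → ℝ) (hβ : SmoothPosDef β)
    (hdecay : ∀ x t u d, d ∈ 𝔻 →
      fderiv ℝ V (x, t) (f x u d, 1) ≤ -lam * V (x, t) + β u)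
    (ᾱ : ℝ → ℝ) (hᾱ : ClassKInf ᾱ)
    -- ᾱ(s) = O(α₁(s)) as s → 0⁺
    (hO : ∃ C : ℝ, ∀ᶠ s in nhdsWithin 0 (Set.Ioi 0), ᾱ s / α₁ s ≤ C) :
    ∃ ρ : ℝ → ℝ, ContDiffOn ℝ (⊤ : ℕ∞) ρ (Set.Ici 0) ∧ MonotoneOn ρ (Set.Ici 0) ∧
      (∀ s, 0 < s → 0 < ρ s) ∧
      ∃ βbar : EuclideanSpace ℝ (Fin m) → ℝ, SmoothPosDef βbar ∧
        ∀ lambar : ℝ, 0 < lambar → lambar < lam / 2 →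
          ∀ x t u d, d ∈ 𝔻 →
            fderiv ℝ (fun p => ∫ s in (0:ℝ)..(V p), ρ s) (x, t) (f x u d, 1) ≤
              -(lambar * (∫ s in (0:ℝ)..(V (x, t)), ρ s)
                + (lam / 2 - lambar) * ᾱ ‖x‖) + βbar u := by
  classical
  obtain ⟨d, hdmono, hd0, hdkey⟩ := dseq_exists α₁ ᾱ hα₁ hᾱ hO
  obtain ⟨ρ, hρsmooth, hρmono, hρ1, hρd⟩ := construct d hdmono hd0
  have hρpos : ∀ w, 0 < ρ w := fun w => lt_of_lt_of_le one_pos (hρ1 w)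
  have hρnn : ∀ w, 0 ≤ ρ w := fun w => (hρpos w).le
  have hρcont : Continuous ρ := hρsmooth.continuous
  have hρint : ∀ a b : ℝ, IntervalIntegrable ρ MeasureTheory.volume a b :=
    fun a b => hρcont.intervalIntegrable a b
  have hα₁nn : ∀ r : ℝ, 0 ≤ r → 0 ≤ α₁ r := by
    intro r hr
    rcases eq_or_lt_of_le hr with h | h
    · rw [← h, hα₁.2.2.1]
    · have := hα₁.2.1 Set.self_mem_Ici hr h
      rw [hα₁.2.2.1] at this; exact this.le
  have hα₁pos : ∀ r : ℝ, 0 < r → 0 < α₁ r := by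
    intro r hr
    have := hα₁.2.1 Set.self_mem_Ici hr.le hr
    rwa [hα₁.2.2.1] at this
  -- key integral lower bound
  have hkey : ∀ r : ℝ, 0 < r → ᾱ r ≤ ∫ s in (0:ℝ)..(α₁ r), ρ s := by
    intro r hr
    set a : ℝ := α₁ r with ha'
    have ha : 0 < a := hα₁pos r hr
    set nn : ℕ := ⌊a/2⌋₊ with hnn
    have h1 : (nn : ℝ) ≤ a/2 := Nat.floor_le (by positivity)
    have h2 : a ≤ 2*((nn:ℝ)+1) := by
      have := Nat.lt_floor_add_one (a/2)
      linarith
    have h3 : 2 * ᾱ r / a ≤ d nn := hdkey r hr nn h2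
    have h4 : d nn ≤ ρ (a/2) := hρd nn _ h1
    have hsplit : (∫ s in (0:ℝ)..(a/2), ρ s) + (∫ s in (a/2)..a, ρ s)
        = ∫ s in (0:ℝ)..a, ρ s :=
      intervalIntegral.integral_add_adjacent_intervals (hρint _ _) (hρint _ _)
    have h5 : 0 ≤ ∫ s in (0:ℝ)..(a/2), ρ s :=
      intervalIntegral.integral_nonneg (by positivity) (fun s _ => hρnn s)
    have h6 : (a - a/2) * ρ (a/2) ≤ ∫ s in (a/2)..a, ρ s := by
      have hmono : ∀ s ∈ Set.Icc (a/2) a, ρ (a/2) ≤ ρ s := by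
        intro s hs
        exact hρmono (Set.mem_Ici.mpr (by linarith [hs.1]))
          (Set.mem_Ici.mpr (by linarith [hs.1])) hs.1
      calc (a - a/2) * ρ (a/2) = ∫ _ in (a/2)..a, ρ (a/2) := by
            rw [intervalIntegral.integral_const, smul_eq_mul]
        _ ≤ ∫ s in (a/2)..a, ρ s :=
            intervalIntegral.integral_mono_on (by linarith)
              (intervalIntegrable_const) (hρint _ _) hmono
    have h7 : (a/2) * (2 * ᾱ r / a) = ᾱ r := by
      field_simp
    nlinarith [mul_le_mul_of_nonneg_left (h3.trans h4) (by positivity : (0:ℝ) ≤ a/2)]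
  have hβsm := hβ.1
  have hβ0 := hβ.2.1
  have hβpos := hβ.2.2
  have hβnn : ∀ u, 0 ≤ β u := by
    intro u
    rcases eq_or_ne u 0 with h | h
    · rw [h, hβ0]
    · exact (hβpos u h).le
  refine ⟨ρ, hρsmooth.contDiffOn, hρmono, fun s _ => hρpos s,
    fun u => ρ (2 * β u / lam) * β u, ⟨?_, ?_, ?_⟩, ?_⟩
  · exact (hρsmooth.comp ((contDiff_const.mul hβsm).div_const lam)).mul hβsm
  · simp [hβ0]
  · intro u hu
    exact mul_pos (hρpos _) (hβpos u hu)
  intro lambar hl1 hl2 x t u dd hdD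
  set Vp : ℝ := V (x, t) with hVp'
  have hVα : α₁ ‖x‖ ≤ Vp := (hsandwich x t).1
  have hVp0 : 0 ≤ Vp := le_trans (hα₁nn _ (norm_nonneg x)) hVα
  set W : ℝ := ∫ s in (0:ℝ)..Vp, ρ s with hW'
  have hWnn : 0 ≤ W :=
    intervalIntegral.integral_nonneg hVp0 (fun s _ => hρnn s)
  have hWub : W ≤ Vp * ρ Vp := by
    have hmono : ∀ s ∈ Set.Icc (0:ℝ) Vp, ρ s ≤ ρ Vp := fun s hs =>
      hρmono (Set.mem_Ici.mpr hs.1) (Set.mem_Ici.mpr hVp0) hs.2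
    calc W ≤ ∫ _ in (0:ℝ)..Vp, ρ Vp :=
          intervalIntegral.integral_mono_on hVp0 (hρint _ _) intervalIntegrable_const hmono
      _ = Vp * ρ Vp := by rw [intervalIntegral.integral_const, smul_eq_mul, sub_zero]
  have hWα : ᾱ ‖x‖ ≤ W := by
    rcases eq_or_lt_of_le (norm_nonneg x) with h | h
    · rw [← h, hᾱ.2.2.1]; exact hWnn
    · have h1 := hkey ‖x‖ h
      have hsplit : (∫ s in (0:ℝ)..(α₁ ‖x‖), ρ s) + (∫ s in (α₁ ‖x‖)..Vp, ρ s) = W :=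
        intervalIntegral.integral_add_adjacent_intervals (hρint _ _) (hρint _ _)
      have h2 : 0 ≤ ∫ s in (α₁ ‖x‖)..Vp, ρ s :=
        intervalIntegral.integral_nonneg hVα (fun s _ => hρnn s)
      linarith
  -- derivative computation
  have hVdiff : DifferentiableAt ℝ V (x, t) :=
    (hV_C1.differentiable one_ne_zero).differentiableAt
  have hFder : HasDerivAt (fun y => ∫ s in (0:ℝ)..y, ρ s) (ρ Vp) Vp :=
    (hρcont.integral_hasStrictDerivAt 0 Vp).hasDerivAt
  have hcomp : HasFDerivAt (fun p => ∫ s in (0:ℝ)..(V p), ρ s)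
      (ρ Vp • fderiv ℝ V (x, t)) (x, t) :=
    hFder.comp_hasFDerivAt _ hVdiff.hasFDerivAt
  rw [hcomp.fderiv]
  simp only [ContinuousLinearMap.smul_apply, smul_eq_mul]
  set DV : ℝ := fderiv ℝ V (x, t) (f x u dd, 1) with hDV'
  have hDV : DV ≤ -lam * Vp + β u := hdecay x t u dd hdD
  have h0 : ρ Vp * DV ≤ ρ Vp * (-lam * Vp + β u) :=
    mul_le_mul_of_nonneg_left hDV (hρnn Vp)
  have hc : 0 < lam/2 - lambar := by linarith
  have h3 : (lam/2 - lambar) * ᾱ ‖x‖ ≤ (lam/2 - lambar) * W :=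
    mul_le_mul_of_nonneg_left hWα hc.le
  have h4 : lambar * W ≤ (lam/2) * W := mul_le_mul_of_nonneg_right (by linarith) hWnn
  have hbarnn : 0 ≤ ρ (2 * β u / lam) * β u := mul_nonneg (hρnn _) (hβnn u)
  rcases le_or_gt (β u) (lam * Vp / 2) with hcase | hcase
  · have h1 : ρ Vp * (-lam * Vp + β u) ≤ ρ Vp * (-(lam/2) * Vp) :=
      mul_le_mul_of_nonneg_left (by linarith) (hρnn Vp)
    have hid : ρ Vp * (-(lam/2) * Vp) = -((lam/2) * (Vp * ρ Vp)) := by ring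
    have h2 : (lam/2) * W ≤ (lam/2) * (Vp * ρ Vp) :=
      mul_le_mul_of_nonneg_left hWub (by linarith)
    linarith
  · have hVle : Vp ≤ 2 * β u / lam := by
      rw [le_div_iff₀ hlam]; linarith
    have hρle : ρ Vp ≤ ρ (2 * β u / lam) :=
      hρmono (Set.mem_Ici.mpr hVp0) (Set.mem_Ici.mpr (le_trans hVp0 hVle)) hVle
    have h1 : ρ Vp * β u ≤ ρ (2 * β u / lam) * β u :=
      mul_le_mul_of_nonneg_right hρle (hβnn u)
    have hid : ρ Vp * (-lam * Vp + β u) = -(lam * (Vp * ρ Vp)) + ρ Vp * β u := by ring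
    have h2 : lam * W ≤ lam * (Vp * ρ Vp) := mul_le_mul_of_nonneg_left hWub hlam.le
    have h5 : 0 ≤ lambar * W := mul_nonneg hl1.le hWnn
    linarith
end

section
/- Let g : ℝⁿ × ℝ × 𝔻 → ℝ be continuous (in all arguments, jointly), with 𝔻 ⊂ ℝ^{n_d} compact, and suppose g(0,0,d) = 0 for all d ∈ 𝔻. Then there exist continuous positive definite functions γ : ℝⁿ → [0,∞) and χ : ℝ → [0,∞) such that |g(z,e,d)|² ≤ γ(z) + χ(e) for all z ∈ ℝⁿ, e ∈ ℝ, d ∈ 𝔻. -/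
open Set Metric

theorem stmt11 {n nd : ℕ}
    (𝔻 : Set (EuclideanSpace ℝ (Fin nd))) (h𝔻 : IsCompact 𝔻)
    (g : EuclideanSpace ℝ (Fin n) → ℝ → EuclideanSpace ℝ (Fin nd) → ℝ)
    (hg_cont : Continuous fun p : (EuclideanSpace ℝ (Fin n)) × ℝ ×
      (EuclideanSpace ℝ (Fin nd)) => g p.1 p.2.1 p.2.2)
    (hg0 : ∀ d ∈ 𝔻, g 0 0 d = 0) :
    ∃ γ : EuclideanSpace ℝ (Fin n) → ℝ, ∃ χ : ℝ → ℝ,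
      Continuous γ ∧ γ 0 = 0 ∧ (∀ z, z ≠ 0 → 0 < γ z) ∧
      Continuous χ ∧ χ 0 = 0 ∧ (∀ e, e ≠ 0 → 0 < χ e) ∧
      ∀ z e d, d ∈ 𝔻 → |g z e d| ^ 2 ≤ γ z + χ e := by
  set K : Set ((EuclideanSpace ℝ (Fin n)) × ℝ × (EuclideanSpace ℝ (Fin nd))) :=
    (closedBall 0 1) ×ˢ ((Icc (-1:ℝ) 1) ×ˢ 𝔻) with hKdef
  have hK : IsCompact K :=
    (isCompact_closedBall _ _).prod ((isCompact_Icc).prod h𝔻)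
  set f : ℝ → ((EuclideanSpace ℝ (Fin n)) × ℝ × (EuclideanSpace ℝ (Fin nd))) → ℝ :=
    fun r p => (g (r • p.1) (r * p.2.1) p.2.2) ^ 2 with hfdef
  have hfc : Continuous ↿f := by
    have hφ : Continuous fun b : ℝ × ((EuclideanSpace ℝ (Fin n)) × ℝ × (EuclideanSpace ℝ (Fin nd))) =>
        ((b.1 • b.2.1, (b.1 * b.2.2.1, b.2.2.2)) :
          (EuclideanSpace ℝ (Fin n)) × ℝ × (EuclideanSpace ℝ (Fin nd))) := by fun_prop
    exact (hg_cont.comp hφ).pow 2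
  set F : ℝ → ℝ := fun r => sSup (f r '' K) with hFdef
  have hFc : Continuous F := hK.continuous_sSup hfc
  have hFbdd : ∀ r, BddAbove (f r '' K) := fun r =>
    (hK.image (hfc.comp (Continuous.prodMk_right r))).bddAbove
  have hFnonneg : ∀ r, 0 ≤ F r := by
    intro r
    apply Real.sSup_nonneg
    rintro x ⟨p, -, rfl⟩
    exact sq_nonneg _
  have hF0 : F 0 = 0 := by
    apply le_antisymm _ (hFnonneg 0)
    apply Real.sSup_le _ le_rfl
    rintro x ⟨⟨z, e, d⟩, hp, rfl⟩
    have hd : d ∈ 𝔻 := hp.2.2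
    simp [hfdef, hg0 d hd]
  refine ⟨fun z => F ‖z‖ + ‖z‖ ^ 2, fun e => F |e| + e ^ 2, ?_, ?_, ?_, ?_, ?_, ?_, ?_⟩
  · exact ((hFc.comp continuous_norm).add (continuous_norm.pow 2))
  · simp [hF0]
  · intro z hz
    have h1 : (0:ℝ) < ‖z‖ ^ 2 := pow_pos (norm_pos_iff.mpr hz) 2
    have := hFnonneg ‖z‖
    dsimp only
    linarith
  · exact ((hFc.comp continuous_abs).add (continuous_pow 2))
  · simp [hF0]
  · intro e he
    have h1 : (0:ℝ) < e ^ 2 := pow_pos (abs_pos.mpr he) 2 |>.trans_le (by rw [sq_abs])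
    have := hFnonneg |e|
    dsimp only
    linarith
  · intro z e d hd
    rw [sq_abs]
    set m : ℝ := max ‖z‖ |e| with hm
    have hm0 : 0 ≤ m := le_trans (norm_nonneg z) (le_max_left _ _)
    rcases eq_or_lt_of_le hm0 with h0 | hmpos
    · -- m = 0 : z = 0, e = 0
      have hz : z = 0 := by
        have : ‖z‖ ≤ 0 := le_of_le_of_eq (le_max_left _ _) h0.symm
        simpa using le_antisymm this (norm_nonneg z)
      have he : e = 0 := by
        have : |e| ≤ 0 := le_of_le_of_eq (le_max_right _ _) h0.symm
        simpa using le_antisymm this (abs_nonneg e)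
      subst hz he
      rw [hg0 d hd]
      have := hFnonneg ‖(0:EuclideanSpace ℝ (Fin n))‖
      have := hFnonneg |(0:ℝ)|
      simp only [norm_zero, abs_zero]
      nlinarith [hFnonneg (0:ℝ), sq_nonneg (0:ℝ)]
    · -- m > 0
      have hmne : m ≠ 0 := ne_of_gt hmpos
      have hmem : ((m⁻¹ • z, (m⁻¹ * e, d)) :
          (EuclideanSpace ℝ (Fin n)) × ℝ × (EuclideanSpace ℝ (Fin nd))) ∈ K := by
        refine ⟨?_, ?_, hd⟩
        · rw [mem_closedBall_zero_iff, norm_smul, norm_inv, Real.norm_eq_abs,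
            abs_of_pos hmpos]
          rw [inv_mul_le_iff₀ hmpos]
          rw [mul_one]; exact le_max_left _ _
        · have : |m⁻¹ * e| ≤ 1 := by
            rw [abs_mul, abs_inv, abs_of_pos hmpos, inv_mul_le_iff₀ hmpos]
            rw [mul_one]; exact le_max_right _ _
          exact abs_le.mp this
      have hval : f m (m⁻¹ • z, (m⁻¹ * e, d)) = (g z e d) ^ 2 := by
        simp only [hfdef]
        rw [smul_smul, mul_inv_cancel₀ hmne, one_smul,
          ← mul_assoc, mul_inv_cancel₀ hmne, one_mul]
      have hle : (g z e d) ^ 2 ≤ F m := by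
        rw [← hval]
        exact le_csSup (hFbdd m) ⟨_, hmem, rfl⟩
      have hsplit : F m ≤ F ‖z‖ + F |e| := by
        rcases max_cases ‖z‖ |e| with ⟨hmz, -⟩ | ⟨hmz, -⟩ <;> rw [hm, hmz]
        · linarith [hFnonneg |e|]
        · linarith [hFnonneg ‖z‖]
      have h1 : (0:ℝ) ≤ ‖z‖ ^ 2 := sq_nonneg _
      have h2 : (0:ℝ) ≤ e ^ 2 := sq_nonneg _
      dsimp only
      linarith
end

section
/- Let V̄ᵢ(zᵢ) be C¹ functions satisfying, along solutions of żᵢ = f̄ᵢ(zᵢ, eᵢ, d(t)), the strong exp-ISS bound V̄̇ᵢ ≤ −(λ̄₁·V̄ᵢ(zᵢ) + c̄₁·δᵢ(zᵢ)) + β̄ᵢ(eᵢ) with λ̄₁, c̄₁ > 0 and |ḡᵢ(zᵢ,eᵢ,d)|² ≤ δᵢ(zᵢ) + lᵢ(eᵢ). Let Mᵢ be a Hurwitz matrix and Pᵢ the symmetric positive definite solution of PᵢMᵢ + MᵢᵀPᵢ = −2I. Then Zᵢ = (zᵢ, η̃ᵢ) with dynamics η̃̇ᵢ = Mᵢη̃ᵢ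 + MᵢNᵢbᵢ⁻¹eᵢ − Nᵢbᵢ⁻¹ḡᵢ(zᵢ,eᵢ,d(t)) admits a C¹ function V̄ᵢ(Zᵢ) = V̄ᵢ(zᵢ) + εη̃ᵢᵀPᵢη̃ᵢ (for suitable ε > 0) satisfying class K∞ bounds ᾱ₁ᵢ(‖Zᵢ‖) ≤ V̄ᵢ(Zᵢ) ≤ ᾱ₂ᵢ(‖Zᵢ‖) and the strong exp-ISS decay V̄̇ᵢ ≤ −(λ₀V̄ᵢ(Zᵢ) + c₀γᵢ(Zᵢ)) + π̄ᵢ(eᵢ), where γᵢ(Zᵢ) = δᵢ(zᵢ) + ‖η̃ᵢ‖², for some λ₀, c₀ > 0 and smooth positive definite π̄ᵢ. -/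
open Matrix

lemma euc_norm_sq {n : ℕ} (x : EuclideanSpace ℝ (Fin n)) :
    ‖x‖ ^ 2 = (fun i => x i) ⬝ᵥ (fun i => x i) := by
  rw [PiLp.norm_sq_eq_of_L2]
  simp [dotProduct, sq]

lemma euc_abs_le {n : ℕ} (x : EuclideanSpace ℝ (Fin n)) (i : Fin n) : |x i| ≤ ‖x‖ := by
  have h : |x i| ^ 2 ≤ ‖x‖ ^ 2 := by
    rw [PiLp.norm_sq_eq_of_L2]
    have h0 : |x i| ^ 2 = ‖x i‖ ^ 2 := by simp
    rw [h0]
    exact Finset.single_le_sum (f := fun j => ‖x j‖ ^ 2) (fun j _ => by positivity) (Finset.mem_univ i)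
  nlinarith [abs_nonneg (x i), norm_nonneg x]

lemma dot_abs_le {n : ℕ} (a : Fin n → ℝ) (x : EuclideanSpace ℝ (Fin n)) :
    |a ⬝ᵥ (fun i => x i)| ≤ (∑ i, |a i|) * ‖x‖ := by
  calc |a ⬝ᵥ (fun i => x i)| ≤ ∑ i, |a i * x i| := Finset.abs_sum_le_sum_abs _ _
    _ ≤ ∑ i, |a i| * ‖x‖ := by
        refine Finset.sum_le_sum fun i _ => ?_
        rw [abs_mul]
        exact mul_le_mul_of_nonneg_left (euc_abs_le x i) (abs_nonneg _)
    _ = (∑ i, |a i|) * ‖x‖ := by rw [Finset.sum_mul]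

lemma dot_symm {n : ℕ} {P : Matrix (Fin n) (Fin n) ℝ} (hPs : Pᵀ = P)
    (v w : Fin n → ℝ) : v ⬝ᵥ P *ᵥ w = w ⬝ᵥ P *ᵥ v := by
  nth_rewrite 1 [← hPs]
  rw [mulVec_transpose, dotProduct_comm, ← dotProduct_mulVec]

lemma posdef_lower {n : ℕ} (P : Matrix (Fin n) (Fin n) ℝ) (hP : P.PosDef) :
    ∃ m : ℝ, 0 < m ∧ ∀ x : EuclideanSpace ℝ (Fin n),
      m * ‖x‖ ^ 2 ≤ (fun i => x i) ⬝ᵥ P *ᵥ (fun i => x i) := by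
  set Q : EuclideanSpace ℝ (Fin n) → ℝ :=
    fun x => (fun i => x i) ⬝ᵥ P *ᵥ (fun i => x i) with hQ
  have hQpos : ∀ x : EuclideanSpace ℝ (Fin n), x ≠ 0 → 0 < Q x := by
    intro x hx
    have hx' : (fun i => x i) ≠ 0 := by
      intro h
      apply hx
      ext i
      exact congrFun h i
    have := hP.dotProduct_mulVec_pos hx'
    simpa [star_trivial] using this
  have hQcont : Continuous Q := by
    have : Q = fun x => ∑ i, x i * ∑ j, P i j * x j := by
      funext x
      simp [hQ, dotProduct, Matrix.mulVec]
    rw [this]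
    refine continuous_finset_sum _ fun i _ => ?_
    have hxi : ∀ i : Fin n, Continuous fun x : EuclideanSpace ℝ (Fin n) => x i :=
      fun i => (EuclideanSpace.proj i).continuous
    exact (hxi i).mul (continuous_finset_sum _ fun j _ => (continuous_const.mul (hxi j)))
  have hQsmul : ∀ (c : ℝ) (x : EuclideanSpace ℝ (Fin n)), Q (c • x) = c ^ 2 * Q x := by
    intro c x
    have h1 : (fun i => (c • x) i) = c • (fun i => x i) := by
      funext i; simp
    have h2 : P *ᵥ (fun i => (c • x) i) = c • (P *ᵥ fun i => x i) := by
      rw [h1, Matrix.mulVec_smul]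
    simp only [hQ]
    rw [h1, Matrix.mulVec_smul, smul_dotProduct, dotProduct_smul, smul_eq_mul, smul_eq_mul]
    ring
  rcases Nat.eq_zero_or_pos n with hn | hn
  · subst hn
    refine ⟨1, one_pos, fun x => ?_⟩
    have hx : x = (0 : EuclideanSpace ℝ (Fin 0)) := Subsingleton.elim _ _
    subst hx
    simp [hQ, dotProduct]
  · haveI : Nonempty (Fin n) := Fin.pos_iff_nonempty.mp hn
    have hsph : (Metric.sphere (0 : EuclideanSpace ℝ (Fin n)) 1).Nonempty :=
      NormedSpace.sphere_nonempty.mpr zero_le_one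
    obtain ⟨u, hu, hmin⟩ := (isCompact_sphere (0 : EuclideanSpace ℝ (Fin n)) 1).exists_isMinOn
      hsph hQcont.continuousOn
    have hu1 : ‖u‖ = 1 := by simpa using hu
    have hune : u ≠ 0 := by
      intro h; rw [h] at hu1; simp at hu1
    refine ⟨Q u, hQpos u hune, fun x => ?_⟩
    by_cases hx : x = 0
    · subst hx; simp [hQ, dotProduct]
    · have hxn : (0 : ℝ) < ‖x‖ := norm_pos_iff.mpr hx
      set v : EuclideanSpace ℝ (Fin n) := ‖x‖⁻¹ • x with hv
      have hvs : v ∈ Metric.sphere (0 : EuclideanSpace ℝ (Fin n)) 1 := by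
        simp [hv, norm_smul, abs_of_pos (inv_pos.mpr hxn), inv_mul_cancel₀ hxn.ne']
      have h1 : Q u ≤ Q v := hmin hvs
      have h2 : Q v = ‖x‖⁻¹ ^ 2 * Q x := hQsmul _ _
      rw [h2] at h1
      have h3 := mul_le_mul_of_nonneg_right h1 (le_of_lt (pow_pos hxn 2))
      calc Q u * ‖x‖ ^ 2 ≤ ‖x‖⁻¹ ^ 2 * Q x * ‖x‖ ^ 2 := h3
        _ = Q x := by field_simp

lemma quad_upper {n : ℕ} (P : Matrix (Fin n) (Fin n) ℝ) (x : EuclideanSpace ℝ (Fin n)) :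
    (fun i => x i) ⬝ᵥ P *ᵥ (fun i => x i) ≤ (∑ i, ∑ j, |P i j|) * ‖x‖ ^ 2 := by
  have hb : ∀ i, |(P *ᵥ fun j => x j) i| ≤ (∑ j, |P i j|) * ‖x‖ := by
    intro i
    calc |(P *ᵥ fun j => x j) i| = |∑ j, P i j * x j| := by simp [Matrix.mulVec, dotProduct]
      _ ≤ ∑ j, |P i j * x j| := Finset.abs_sum_le_sum_abs _ _
      _ ≤ ∑ j, |P i j| * ‖x‖ := by
          refine Finset.sum_le_sum fun j _ => ?_
          rw [abs_mul]
          exact mul_le_mul_of_nonneg_left (euc_abs_le x j) (abs_nonneg _)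
      _ = (∑ j, |P i j|) * ‖x‖ := by rw [Finset.sum_mul]
  calc (fun i => x i) ⬝ᵥ P *ᵥ (fun i => x i) ≤ |(fun i => x i) ⬝ᵥ P *ᵥ (fun i => x i)| :=
        le_abs_self _
    _ ≤ ∑ i, |x i * (P *ᵥ fun j => x j) i| := by
        rw [dotProduct]
        exact Finset.abs_sum_le_sum_abs _ _
    _ ≤ ∑ i, ‖x‖ * ((∑ j, |P i j|) * ‖x‖) := by
        refine Finset.sum_le_sum fun i _ => ?_
        rw [abs_mul]
        exact mul_le_mul (euc_abs_le x i) (hb i) (abs_nonneg _) (norm_nonneg _)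
    _ = (∑ i, ∑ j, |P i j|) * ‖x‖ ^ 2 := by
        have h : ∀ i : Fin n, ‖x‖ * ((∑ j, |P i j|) * ‖x‖) = (∑ j, |P i j|) * ‖x‖ ^ 2 :=
          fun i => by ring
        rw [Finset.sum_congr rfl (fun i _ => h i), ← Finset.sum_mul]

lemma expand_E {n : ℕ} (M P : Matrix (Fin n) (Fin n) ℝ) (hPs : Pᵀ = P)
    (hLyap : P * M + Mᵀ * P = (-2 : ℝ) • (1 : Matrix (Fin n) (Fin n) ℝ))
    (x w v : Fin n → ℝ) (c₁ c₂ : ℝ) :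
    (M *ᵥ x + c₁ • w - c₂ • v) ⬝ᵥ P *ᵥ x + x ⬝ᵥ P *ᵥ (M *ᵥ x + c₁ • w - c₂ • v)
    = -2 * (x ⬝ᵥ x) + 2 * c₁ * (w ⬝ᵥ P *ᵥ x) - 2 * c₂ * (v ⬝ᵥ P *ᵥ x) := by
  have hMM : (M *ᵥ x) ⬝ᵥ P *ᵥ x + x ⬝ᵥ P *ᵥ (M *ᵥ x) = -2 * (x ⬝ᵥ x) := by
    have h1 : x ⬝ᵥ (Mᵀ * P) *ᵥ x = (M *ᵥ x) ⬝ᵥ P *ᵥ x := by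
      rw [← mulVec_mulVec, dotProduct_mulVec, vecMul_transpose]
    have h2 : x ⬝ᵥ (P * M) *ᵥ x = x ⬝ᵥ P *ᵥ (M *ᵥ x) := by
      rw [← mulVec_mulVec]
    rw [← h1, ← h2, ← dotProduct_add, ← add_mulVec, add_comm (Mᵀ * P) (P * M), hLyap,
      smul_mulVec, one_mulVec, dotProduct_smul, smul_eq_mul]
  rw [sub_dotProduct, add_dotProduct, smul_dotProduct, smul_dotProduct,
    Matrix.mulVec_sub, Matrix.mulVec_add, Matrix.mulVec_smul, Matrix.mulVec_smul,
    dotProduct_sub, dotProduct_add, dotProduct_smul, dotProduct_smul,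
    dot_symm hPs x w, dot_symm hPs x v]
  simp only [smul_eq_mul]
  linarith [hMM]

lemma young_bound {s d A nrm : ℝ} (hA : 0 ≤ A) (hnrm : 0 ≤ nrm) (h : |d| ≤ A * nrm) :
    2 * s * d ≤ 4 * s ^ 2 * A ^ 2 + nrm ^ 2 / 4 := by
  have h1 : 2 * s * d ≤ 2 * |s| * (A * nrm) := by
    have h2 : s * d ≤ |s| * |d| := le_trans (le_abs_self _) (abs_mul s d).le
    nlinarith [abs_nonneg s, h]
  nlinarith [sq_nonneg (2 * |s| * A - nrm / 2), sq_abs s, abs_nonneg s]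

lemma classKInf_quad {a : ℝ} (ha : 0 < a) : ClassKInf (fun t => a * t ^ 2) := by
  refine ⟨(continuous_const.mul (continuous_pow 2)).continuousOn, ?_, by simp, ?_⟩
  · intro x hx y hy hxy
    simp only [Set.mem_Ici] at hx hy
    show a * x ^ 2 < a * y ^ 2
    exact mul_lt_mul_of_pos_left (pow_lt_pow_left₀ hxy hx two_ne_zero) ha
  · exact (Filter.tendsto_pow_atTop two_ne_zero).const_mul_atTop ha

lemma classKInf_min {f g : ℝ → ℝ} (hf : ClassKInf f) (hg : ClassKInf g) :
    ClassKInf (fun t => min (f t) (g t)) := by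
  obtain ⟨hf1, hf2, hf3, hf4⟩ := hf
  obtain ⟨hg1, hg2, hg3, hg4⟩ := hg
  refine ⟨continuous_min.comp_continuousOn (hf1.prodMk hg1), ?_, by simp [hf3, hg3], ?_⟩
  · intro x hx y hy hxy
    exact lt_min (lt_of_le_of_lt (min_le_left _ _) (hf2 hx hy hxy))
      (lt_of_le_of_lt (min_le_right _ _) (hg2 hx hy hxy))
  · rw [Filter.tendsto_atTop]
    intro c
    filter_upwards [Filter.tendsto_atTop.mp hf4 c, Filter.tendsto_atTop.mp hg4 c] with t h1 h2
    exact le_min h1 h2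

lemma classKInf_add_quad {f : ℝ → ℝ} (hf : ClassKInf f) {a : ℝ} (ha : 0 ≤ a) :
    ClassKInf (fun t => f t + a * t ^ 2) := by
  obtain ⟨hf1, hf2, hf3, hf4⟩ := hf
  refine ⟨hf1.add (continuous_const.mul (continuous_pow 2)).continuousOn, ?_, by simp [hf3], ?_⟩
  · intro x hx y hy hxy
    simp only [Set.mem_Ici] at hx hy
    have hlt := hf2 hx hy hxy
    show f x + a * x ^ 2 < f y + a * y ^ 2
    have h2 : a * x ^ 2 ≤ a * y ^ 2 :=
      mul_le_mul_of_nonneg_left (pow_le_pow_left₀ hx hxy.le 2) ha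
    linarith
  · exact Filter.tendsto_atTop_add_right_of_le _ 0 hf4 (fun t => by positivity)

set_option maxHeartbeats 1000000 in
theorem stmt14 {nz sdim nd : ℕ}
    (𝔻 : Set (EuclideanSpace ℝ (Fin nd)))
    -- z-subsystem dynamics and its strong exp-ISS Lyapunov function
    (fz : EuclideanSpace ℝ (Fin nz) → ℝ → EuclideanSpace ℝ (Fin nd) →
      EuclideanSpace ℝ (Fin nz))
    (Vz : EuclideanSpace ℝ (Fin nz) → ℝ) (hVz_C1 : ContDiff ℝ 1 Vz)
    (αz₁ αz₂ : ℝ → ℝ) (hαz₁ : ClassKInf αz₁) (hαz₂ : ClassKInf αz₂)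
    (hVz_sandwich : ∀ z, αz₁ ‖z‖ ≤ Vz z ∧ Vz z ≤ αz₂ ‖z‖)
    (lam₁ c₁ : ℝ) (hlam₁ : 0 < lam₁) (hc₁ : 0 < c₁)
    (δ : EuclideanSpace ℝ (Fin nz) → ℝ) (hδ : SmoothPosDef δ)
    (l : ℝ → ℝ) (hl : SmoothPosDef l)
    (βb : ℝ → ℝ) (hβb : SmoothPosDef βb)
    (hVz_decay : ∀ z e d, d ∈ 𝔻 →
      fderiv ℝ Vz z (fz z e d) ≤ -(lam₁ * Vz z + c₁ * δ z) + βb e)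
    -- bound on the nonlinearity ḡ
    (gb : EuclideanSpace ℝ (Fin nz) → ℝ → EuclideanSpace ℝ (Fin nd) → ℝ)
    (hgb : ∀ z e d, d ∈ 𝔻 → (gb z e d) ^ 2 ≤ δ z + l e)
    -- internal model data: M Hurwitz, P ≻ 0 with PM + MᵀP = -2I, N, b ≠ 0
    (M P : Matrix (Fin sdim) (Fin sdim) ℝ)
    (hM : ∀ μ ∈ spectrum ℂ (M.map (algebraMap ℝ ℂ)), μ.re < 0)
    (hP : P.PosDef)
    (hLyap : P * M + Mᵀ * P = (-2 : ℝ) • (1 : Matrix (Fin sdim) (Fin sdim) ℝ))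
    (Nv : Fin sdim → ℝ) (b : ℝ) (hb : b ≠ 0) :
    ∃ ε : ℝ, 0 < ε ∧ ∃ lam₀ c₀ : ℝ, 0 < lam₀ ∧ 0 < c₀ ∧
      ∃ πb : ℝ → ℝ, SmoothPosDef πb ∧
      ∃ ᾱ₁ ᾱ₂ : ℝ → ℝ, ClassKInf ᾱ₁ ∧ ClassKInf ᾱ₂ ∧
        -- W(z,η) = V̄(z) + ε ηᵀPη satisfies the class K∞ sandwich
        (∀ (z : EuclideanSpace ℝ (Fin nz)) (η : EuclideanSpace ℝ (Fin sdim)),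
          ᾱ₁ ‖(z, η)‖ ≤ Vz z + ε * ((fun i => η i) ⬝ᵥ P.mulVec fun i => η i) ∧
          Vz z + ε * ((fun i => η i) ⬝ᵥ P.mulVec fun i => η i) ≤ ᾱ₂ ‖(z, η)‖) ∧
        -- and the strong exp-ISS decay along the cascade dynamics
        ∀ (z : EuclideanSpace ℝ (Fin nz)) (η : EuclideanSpace ℝ (Fin sdim))
          (e : ℝ) (d : EuclideanSpace ℝ (Fin nd)), d ∈ 𝔻 →
          fderiv ℝ Vz z (fz z e d)
            + ε * ((M.mulVec (fun i => η i) + (b⁻¹ * e) • M.mulVec Nv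
                      - (b⁻¹ * gb z e d) • Nv) ⬝ᵥ P.mulVec (fun i => η i)
                  + (fun i => η i) ⬝ᵥ P.mulVec
                      (M.mulVec (fun i => η i) + (b⁻¹ * e) • M.mulVec Nv
                        - (b⁻¹ * gb z e d) • Nv))
          ≤ -(lam₀ * (Vz z + ε * ((fun i => η i) ⬝ᵥ P.mulVec fun i => η i))
                + c₀ * (δ z + ‖η‖ ^ 2)) + πb e := by
  have hPs : Pᵀ = P := by simpa [Matrix.IsSymm] using hP.1
  obtain ⟨m, hm, hmle⟩ := posdef_lower P hP
  obtain ⟨a, hadef⟩ : ∃ a : Fin sdim → ℝ, a = (M *ᵥ Nv) ᵥ* P := ⟨_, rfl⟩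
  obtain ⟨cN, hcNdef⟩ : ∃ cN : Fin sdim → ℝ, cN = Nv ᵥ* P := ⟨_, rfl⟩
  obtain ⟨A, hAdef⟩ : ∃ A : ℝ, A = ∑ i, |a i| := ⟨_, rfl⟩
  obtain ⟨C, hCdef⟩ : ∃ C : ℝ, C = ∑ i, |cN i| := ⟨_, rfl⟩
  obtain ⟨Cp, hCpdef⟩ : ∃ Cp : ℝ, Cp = ∑ i, ∑ j, |P i j| := ⟨_, rfl⟩
  have hA0 : 0 ≤ A := hAdef ▸ Finset.sum_nonneg fun i _ => abs_nonneg _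
  have hC0 : 0 ≤ C := hCdef ▸ Finset.sum_nonneg fun i _ => abs_nonneg _
  have hCp0 : 0 ≤ Cp :=
    hCpdef ▸ Finset.sum_nonneg fun i _ => Finset.sum_nonneg fun j _ => abs_nonneg _
  obtain ⟨K, hKdef⟩ : ∃ K : ℝ, K = 4 * (b⁻¹) ^ 2 * (A ^ 2 + C ^ 2) + 1 := ⟨_, rfl⟩
  have hK0 : 0 < K := by rw [hKdef]; positivity
  obtain ⟨ε, hεdef⟩ : ∃ ε : ℝ, ε = min 1 (c₁ / (2 * K)) := ⟨_, rfl⟩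
  have hε0 : 0 < ε := by
    rw [hεdef]
    exact lt_min one_pos (div_pos hc₁ (by linarith))
  have hε1 : ε ≤ 1 := by rw [hεdef]; exact min_le_left _ _
  have hεK : ε * K ≤ c₁ / 2 := by
    have h : ε ≤ c₁ / (2 * K) := by rw [hεdef]; exact min_le_right _ _
    calc ε * K ≤ (c₁ / (2 * K)) * K := mul_le_mul_of_nonneg_right h hK0.le
      _ = c₁ / 2 := by field_simp
  obtain ⟨lam₀, hlamdef⟩ : ∃ lam₀ : ℝ, lam₀ = min lam₁ (1 / (2 * (Cp + 1))) := ⟨_, rfl⟩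
  have hlam0 : 0 < lam₀ := by
    rw [hlamdef]
    exact lt_min hlam₁ (div_pos one_pos (by linarith))
  have hlam1 : lam₀ ≤ lam₁ := by rw [hlamdef]; exact min_le_left _ _
  have hlamCp : lam₀ * Cp ≤ 1 / 2 := by
    have h1 : lam₀ * (2 * (Cp + 1)) ≤ 1 := by
      have h : lam₀ ≤ 1 / (2 * (Cp + 1)) := by rw [hlamdef]; exact min_le_right _ _
      calc lam₀ * (2 * (Cp + 1)) ≤ (1 / (2 * (Cp + 1))) * (2 * (Cp + 1)) :=
            mul_le_mul_of_nonneg_right h (by linarith)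
        _ = 1 := by field_simp
    linarith [hlam0.le]
  obtain ⟨c₀, hc0def⟩ : ∃ c₀ : ℝ, c₀ = min (c₁ / 2) ε := ⟨_, rfl⟩
  have hc0 : 0 < c₀ := by rw [hc0def]; exact lt_min (by linarith) hε0
  have hc0a : c₀ ≤ c₁ / 2 := by rw [hc0def]; exact min_le_left _ _
  have hc0b : c₀ ≤ ε := by rw [hc0def]; exact min_le_right _ _
  -- nonnegativity facts
  have hδ0 : ∀ z, 0 ≤ δ z := by
    intro z
    by_cases h : z = 0
    · simp [h, hδ.2.1]
    · exact (hδ.2.2 z h).le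
  have hl0 : ∀ t, 0 ≤ l t := by
    intro t
    by_cases h : t = 0
    · simp [h, hl.2.1]
    · exact (hl.2.2 t h).le
  have hVz0 : ∀ z, 0 ≤ Vz z := by
    intro z
    have h0 : αz₁ 0 ≤ αz₁ ‖z‖ := by
      rcases eq_or_lt_of_le (norm_nonneg z) with h | h
      · rw [← h]
      · exact (hαz₁.2.1 Set.self_mem_Ici (Set.mem_Ici.mpr (norm_nonneg z)) h).le
    rw [hαz₁.2.2.1] at h0
    linarith [(hVz_sandwich z).1]
  have hq0 : ∀ η : EuclideanSpace ℝ (Fin sdim),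
      0 ≤ (fun i => η i) ⬝ᵥ P *ᵥ (fun i => η i) :=
    fun η => le_trans (mul_nonneg hm.le (sq_nonneg _)) (hmle η)
  refine ⟨ε, hε0, lam₀, c₀, hlam0, hc0,
    (fun t => βb t + K * t ^ 2 + K * l t), ?_,
    (fun t => min (αz₁ t) ((ε * m) * t ^ 2)),
    (fun t => αz₂ t + (ε * Cp) * t ^ 2),
    classKInf_min hαz₁ (classKInf_quad (mul_pos hε0 hm)),
    classKInf_add_quad hαz₂ (mul_nonneg hε0.le hCp0), ?_, ?_⟩
  · -- SmoothPosDef πb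
    refine ⟨(hβb.1.add (contDiff_const.mul (contDiff_id.pow 2))).add
      (contDiff_const.mul hl.1), by simp [hβb.2.1, hl.2.1], ?_⟩
    intro t ht
    have h1 := hβb.2.2 t ht
    have h2 := hl.2.2 t ht
    have h3 := mul_pos hK0 h2
    have h4 := mul_nonneg hK0.le (sq_nonneg t)
    show (0 : ℝ) < βb t + K * t ^ 2 + K * l t
    linarith
  · -- sandwich
    intro z η
    have hq_up : (fun i => η i) ⬝ᵥ P *ᵥ (fun i => η i) ≤ Cp * ‖η‖ ^ 2 :=
      hCpdef ▸ quad_upper P η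
    have hq_low : m * ‖η‖ ^ 2 ≤ (fun i => η i) ⬝ᵥ P *ᵥ (fun i => η i) := hmle η
    have hz_le : ‖z‖ ≤ ‖(z, η)‖ := norm_fst_le (z, η)
    have hη_le : ‖η‖ ≤ ‖(z, η)‖ := norm_snd_le (z, η)
    have hr0 : (0 : ℝ) ≤ ‖(z, η)‖ := norm_nonneg _
    constructor
    · -- lower bound
      show min (αz₁ ‖(z, η)‖) ((ε * m) * ‖(z, η)‖ ^ 2)
        ≤ Vz z + ε * ((fun i => η i) ⬝ᵥ P *ᵥ (fun i => η i))
      have hmax : ‖(z, η)‖ = max ‖z‖ ‖η‖ := Prod.norm_def _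
      rcases max_cases ‖z‖ ‖η‖ with ⟨hcase, _⟩ | ⟨hcase, _⟩
      · have h1 : min (αz₁ ‖(z, η)‖) ((ε * m) * ‖(z, η)‖ ^ 2) ≤ αz₁ ‖z‖ := by
          rw [hmax, hcase]
          exact min_le_left _ _
        have h2 : αz₁ ‖z‖ ≤ Vz z := (hVz_sandwich z).1
        have h3 : 0 ≤ ε * ((fun i => η i) ⬝ᵥ P *ᵥ (fun i => η i)) :=
          mul_nonneg hε0.le (hq0 η)
        linarith
      · have h1 : min (αz₁ ‖(z, η)‖) ((ε * m) * ‖(z, η)‖ ^ 2) ≤ (ε * m) * ‖η‖ ^ 2 := by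
          rw [hmax, hcase]
          exact min_le_right _ _
        have h2 : (ε * m) * ‖η‖ ^ 2 ≤ ε * ((fun i => η i) ⬝ᵥ P *ᵥ (fun i => η i)) := by
          have h4 := mul_le_mul_of_nonneg_left hq_low hε0.le
          linarith [h4]
        have h3 := hVz0 z
        linarith
    · -- upper bound
      show Vz z + ε * ((fun i => η i) ⬝ᵥ P *ᵥ (fun i => η i))
        ≤ αz₂ ‖(z, η)‖ + (ε * Cp) * ‖(z, η)‖ ^ 2
      have h1 : Vz z ≤ αz₂ ‖z‖ := (hVz_sandwich z).2
      have h2 : αz₂ ‖z‖ ≤ αz₂ ‖(z, η)‖ :=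
        hαz₂.2.1.monotoneOn (Set.mem_Ici.mpr (norm_nonneg z)) (Set.mem_Ici.mpr hr0) hz_le
      have h3 : ε * ((fun i => η i) ⬝ᵥ P *ᵥ (fun i => η i)) ≤ (ε * Cp) * ‖(z, η)‖ ^ 2 := by
        have e1 : ε * ((fun i => η i) ⬝ᵥ P *ᵥ (fun i => η i)) ≤ ε * (Cp * ‖η‖ ^ 2) :=
          mul_le_mul_of_nonneg_left hq_up hε0.le
        have e2 : ‖η‖ ^ 2 ≤ ‖(z, η)‖ ^ 2 := pow_le_pow_left₀ (norm_nonneg η) hη_le 2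
        have e3 : (ε * Cp) * ‖η‖ ^ 2 ≤ (ε * Cp) * ‖(z, η)‖ ^ 2 :=
          mul_le_mul_of_nonneg_left e2 (mul_nonneg hε0.le hCp0)
        linarith [e1, e3]
      linarith
  · -- decay
    intro z η e d hd
    have hg2 := hgb z e d hd
    have hf1 := hVz_decay z e d hd
    have hE := expand_E M P hPs hLyap (fun i => η i) (M *ᵥ Nv) Nv (b⁻¹ * e) (b⁻¹ * gb z e d)
    have hxx : (fun i => η i) ⬝ᵥ (fun i => η i) = ‖η‖ ^ 2 := (euc_norm_sq η).symm
    beta_reduce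
    rw [hE, hxx]
    obtain ⟨D1, hD1def⟩ : ∃ D1 : ℝ, D1 = (M *ᵥ Nv) ⬝ᵥ P *ᵥ (fun i => η i) := ⟨_, rfl⟩
    obtain ⟨D2, hD2def⟩ : ∃ D2 : ℝ, D2 = Nv ⬝ᵥ P *ᵥ (fun i => η i) := ⟨_, rfl⟩
    obtain ⟨Qη, hQdef⟩ : ∃ Q : ℝ, Q = (fun i => η i) ⬝ᵥ P *ᵥ (fun i => η i) := ⟨_, rfl⟩
    rw [← hD1def, ← hD2def, ← hQdef]
    have hD1 : |D1| ≤ A * ‖η‖ := by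
      rw [hD1def, dotProduct_mulVec, ← hadef, hAdef]
      exact dot_abs_le a η
    have hD2 : |D2| ≤ C * ‖η‖ := by
      rw [hD2def, dotProduct_mulVec, ← hcNdef, hCdef]
      exact dot_abs_le cN η
    have hb1 : 2 * (b⁻¹ * e) * D1 ≤
        4 * (b⁻¹ * e) ^ 2 * A ^ 2 + ‖η‖ ^ 2 / 4 :=
      young_bound hA0 (norm_nonneg η) hD1
    have hb2 : 2 * (-(b⁻¹ * gb z e d)) * D2 ≤
        4 * (-(b⁻¹ * gb z e d)) ^ 2 * C ^ 2 + ‖η‖ ^ 2 / 4 :=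
      young_bound hC0 (norm_nonneg η) hD2
    have h5 : 4 * (b⁻¹ * e) ^ 2 * A ^ 2 ≤ K * e ^ 2 := by
      rw [hKdef]
      linarith [mul_nonneg (mul_nonneg (sq_nonneg b⁻¹) (sq_nonneg C)) (sq_nonneg e),
        sq_nonneg e]
    have h6 : 4 * (-(b⁻¹ * gb z e d)) ^ 2 * C ^ 2 ≤ K * (gb z e d) ^ 2 := by
      rw [hKdef]
      linarith [mul_nonneg (mul_nonneg (sq_nonneg b⁻¹) (sq_nonneg A)) (sq_nonneg (gb z e d)),
        sq_nonneg (gb z e d)]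
    have h7 : K * (gb z e d) ^ 2 ≤ K * (δ z + l e) := mul_le_mul_of_nonneg_left hg2 hK0.le
    have hInner : -2 * ‖η‖ ^ 2 + 2 * (b⁻¹ * e) * D1
        - 2 * (b⁻¹ * gb z e d) * D2
        ≤ -(3 / 2) * ‖η‖ ^ 2 + K * e ^ 2 + K * (δ z + l e) := by
      linarith [hb1, hb2, h5, h6, h7]
    have g1 : ε * (-2 * ‖η‖ ^ 2 + 2 * (b⁻¹ * e) * D1
        - 2 * (b⁻¹ * gb z e d) * D2)
        ≤ ε * (-(3 / 2) * ‖η‖ ^ 2 + K * e ^ 2 + K * (δ z + l e)) :=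
      mul_le_mul_of_nonneg_left hInner hε0.le
    have G2 : ε * (K * e ^ 2) ≤ K * e ^ 2 := by
      linarith [mul_nonneg (mul_nonneg (sub_nonneg.mpr hε1) hK0.le) (sq_nonneg e)]
    have G3 : ε * (K * l e) ≤ K * l e := by
      linarith [mul_nonneg (mul_nonneg (sub_nonneg.mpr hε1) hK0.le) (hl0 e)]
    have G4 : ε * (K * δ z) ≤ (c₁ / 2) * δ z := by
      have h := mul_le_mul_of_nonneg_right hεK (hδ0 z)
      linarith [h]
    have F6 : lam₀ * Vz z ≤ lam₁ * Vz z :=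
      mul_le_mul_of_nonneg_right hlam1 (hVz0 z)
    have hq_up : Qη ≤ Cp * ‖η‖ ^ 2 := by
      rw [hQdef, hCpdef]
      exact quad_upper P η
    have hq0' : 0 ≤ Qη := hQdef ▸ hq0 η
    have F7 : lam₀ * (ε * Qη) ≤ ε / 2 * ‖η‖ ^ 2 := by
      have e1 : lam₀ * (ε * Qη) ≤ lam₀ * (ε * (Cp * ‖η‖ ^ 2)) :=
        mul_le_mul_of_nonneg_left (mul_le_mul_of_nonneg_left hq_up hε0.le) hlam0.le
      have e3 : (lam₀ * Cp) * (ε * ‖η‖ ^ 2) ≤ (1 / 2) * (ε * ‖η‖ ^ 2) :=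
        mul_le_mul_of_nonneg_right hlamCp (mul_nonneg hε0.le (sq_nonneg _))
      linarith [e1, e3]
    have F8 : c₀ * δ z ≤ (c₁ / 2) * δ z :=
      mul_le_mul_of_nonneg_right hc0a (hδ0 z)
    have F9 : c₀ * ‖η‖ ^ 2 ≤ ε * ‖η‖ ^ 2 :=
      mul_le_mul_of_nonneg_right hc0b (sq_nonneg _)
    linarith [g1, hf1, G2, G3, G4, F6, F7, F8, F9]
end

section
/- Consider a switched system ẋ = f_{σ(t)}(x, d(t)) with σ : [0,∞) → {1,…,n₀} piecewise constant with average dwell time τ_d (i.e., the number of switches on any interval (t,T) is at most N₀ + (T−t)/τ_d). Suppose there exist C¹ functions U_p, p = 1,…,n₀, class K∞ functions α̃₁, α̃₂ and λ₀ > 0 with α̃₁(‖x‖) ≤ U_p(x) ≤ α̃₂(‖x‖) and (∂U_p/∂x)·f_p(x,d(t)) ≤ −λ₀U_p(x) for all x, all p, and all admissible d. Suppose further μ₀ := sup_{x≠0} α̃₂(‖x‖)/α̃₁(‖x‖) < ∞ and τ_d > ln(μ₀)/λ₀. Then the origin of the switched system is globally asymptotically stable, uniformly over admissible d and all such σ.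 -/
/-- A piecewise-constant switching signal `σ` with switching times `τ`,
possessing average dwell time `τd` with chatter bound `N₀`: the number of
switches on any interval is at most `N₀ + (length)/τd`. -/
structure SwitchSignal (n₀ : ℕ) (τd N₀ : ℝ) where
  σ : ℝ → Fin n₀
  τ : ℕ → ℝ
  τ_zero : τ 0 = 0
  τ_mono : StrictMono τ
  τ_unbounded : Filter.Tendsto τ Filter.atTop Filter.atTop
  piecewise : ∀ k, ∀ t ∈ Set.Ico (τ k) (τ (k + 1)), σ t = σ (τ k)
  adt : ∀ k m : ℕ, (m : ℝ) ≤ N₀ + (τ (k + m) - τ k) / τd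

/-! Along a trajectory the active Lyapunov function `U_σ` decays like `exp (-λ₀ t)` between
switches, and at a switch it grows at most by the factor `μ = max μ₀ 1`, because
`U_q ≤ α₂ ≤ μ α₁ ≤ μ U_p`. Up to time `t` there are at most `N₀ + t / τd` switches, so
`U_σ(t) (x t) ≤ μ ^ N₀ · exp (-(λ₀ - log μ / τd) t) · U_σ(0) (x 0)`, and the rate is positive
exactly because `τd > log μ₀ / λ₀`. Sandwiching with `α₁`, `α₂` gives a class-`KL` estimate,
hence uniform stability and global attractivity. -/

open Real Set Filter Topology

namespace ClassKInf

variable {α α₁ α₂ : ℝ → ℝ}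

theorem nonneg (h : ClassKInf α) {s : ℝ} (hs : 0 ≤ s) : 0 ≤ α s :=
  h.2.2.1 ▸ h.2.1.monotoneOn self_mem_Ici hs hs

theorem pos (h : ClassKInf α) {s : ℝ} (hs : 0 < s) : 0 < α s :=
  h.2.2.1 ▸ h.2.1 self_mem_Ici hs.le hs

theorem lt_of_apply_lt (h : ClassKInf α) {r s : ℝ} (hr : 0 ≤ r) (hs : 0 ≤ s)
    (hlt : α r < α s) : r < s :=
  (h.2.1.lt_iff_lt hr hs).1 hlt

theorem le_mul_of_le (h₁ : ClassKInf α₁) (h₂ : ClassKInf α₂) {μ₀ μ : ℝ}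
    (hμ₀ : ∀ s, 0 < s → α₂ s ≤ μ₀ * α₁ s) (hμ : μ₀ ≤ μ) {s : ℝ} (hs : 0 ≤ s) :
    α₂ s ≤ μ * α₁ s := by
  rcases hs.eq_or_lt with rfl | hs
  · simp [h₁.2.2.1, h₂.2.2.1]
  · exact (hμ₀ s hs).trans (by gcongr; exact h₁.nonneg hs.le)

theorem exists_pos_forall_mul_lt (h : ClassKInf α) (C : ℝ) {r : ℝ} (hr : 0 < r) :
    ∃ δ > 0, ∀ s ∈ Ico 0 δ, C * α s < r := by
  have hlim : Tendsto (fun s => C * α s) (𝓝[≥] 0) (𝓝 0) := by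
    simpa [h.2.2.1] using ((h.1 0 self_mem_Ici).tendsto).const_mul C
  exact mem_nhdsGE_iff_exists_Ico_subset.1 (hlim (gt_mem_nhds hr))

variable {E : Type*} [NormedAddCommGroup E]

theorem exists_pos_forall_norm_lt_of_le (h₁ : ClassKInf α₁) (h₂ : ClassKInf α₂) {C c ε : ℝ}
    (hC : 0 ≤ C) (hc : 0 ≤ c) (hε : 0 < ε) :
    ∃ δ > 0, ∀ x : ℝ → E, (∀ t, 0 ≤ t → α₁ ‖x t‖ ≤ C * exp (-c * t) * α₂ ‖x 0‖) →
      ‖x 0‖ < δ → ∀ t, 0 ≤ t → ‖x t‖ < ε := by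
  obtain ⟨δ, hδ, hsmall⟩ := h₂.exists_pos_forall_mul_lt C (h₁.pos hε)
  refine ⟨δ, hδ, fun x hx hx0 t ht => h₁.lt_of_apply_lt (norm_nonneg _) hε.le ?_⟩
  have hdecay : exp (-c * t) ≤ 1 := exp_le_one_iff.2 (by nlinarith)
  calc α₁ ‖x t‖ ≤ C * exp (-c * t) * α₂ ‖x 0‖ := hx t ht
    _ ≤ C * 1 * α₂ ‖x 0‖ := by gcongr; exact h₂.nonneg (norm_nonneg _)
    _ < α₁ ε := by rw [mul_one]; exact hsmall _ ⟨norm_nonneg _, hx0⟩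

theorem tendsto_zero_of_tendsto_apply_norm (h : ClassKInf α) {ι : Type*} {l : Filter ι}
    {x : ι → E} (hx : Tendsto (fun i => α ‖x i‖) l (𝓝 0)) : Tendsto x l (𝓝 0) := by
  refine tendsto_zero_iff_norm_tendsto_zero.2 (Metric.tendsto_nhds.2 fun ε hε => ?_)
  filter_upwards [hx.eventually (gt_mem_nhds (h.pos hε))] with i hi
  rw [Real.dist_0_eq_abs, abs_norm]
  exact h.lt_of_apply_lt (norm_nonneg _) hε.le hi

theorem tendsto_zero_of_le (h₁ : ClassKInf α₁) {C c : ℝ} (hc : 0 < c) {r : ℝ} {x : ℝ → E}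
    (hx : ∀ t, 0 ≤ t → α₁ ‖x t‖ ≤ C * exp (-c * t) * r) : Tendsto x atTop (𝓝 0) := by
  refine h₁.tendsto_zero_of_tendsto_apply_norm
    (squeeze_zero' (g := fun t => C * exp (-c * t) * r) ?_ ?_ ?_)
  · exact Eventually.of_forall fun t => h₁.nonneg (norm_nonneg _)
  · filter_upwards [eventually_ge_atTop 0] with t ht using hx t ht
  · have hexp : Tendsto (fun t => exp (-c * t)) atTop (𝓝 0) :=
      tendsto_exp_atBot.comp (tendsto_id.const_mul_atTop_of_neg (neg_neg_of_pos hc))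
    simpa using (hexp.const_mul C).mul_const r

end ClassKInf

theorem le_mul_exp_of_fderiv_le {E : Type*} [NormedAddCommGroup E] [NormedSpace ℝ E]
    {V : E → ℝ} (hV : Differentiable ℝ V) {x v : ℝ → E} {lam a b : ℝ}
    (hx : ∀ t ∈ Icc a b, HasDerivAt x (v t) t)
    (hdecay : ∀ t ∈ Ico a b, fderiv ℝ V (x t) (v t) ≤ -lam * V (x t))
    {t : ℝ} (ht : t ∈ Icc a b) : V (x t) ≤ V (x a) * exp (-lam * (t - a)) := by
  have hVx : ∀ s ∈ Icc a b, HasDerivAt (V ∘ x) (fderiv ℝ V (x s) (v s)) s := fun s hs =>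
    (hV (x s)).hasFDerivAt.comp_hasDerivAt s (hx s hs)
  have := le_gronwallBound_of_liminf_deriv_right_le (f := V ∘ x) (K := -lam) (ε := 0)
    (fun s hs => (hVx s hs).continuousAt.continuousWithinAt)
    (fun s hs _ hr => (hVx s (Ico_subset_Icc_self hs)).hasDerivWithinAt.liminf_right_slope_le hr)
    le_rfl (by simpa using hdecay) t ht
  simpa [gronwallBound_ε0] using this

namespace SwitchSignal

variable {n₀ : ℕ} {τd N₀ : ℝ} (S : SwitchSignal n₀ τd N₀)

theorem τ_nonneg (k : ℕ) : 0 ≤ S.τ k :=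
  S.τ_zero ▸ S.τ_mono.monotone k.zero_le

theorem exists_mem_Ico {t : ℝ} (ht : 0 ≤ t) : ∃ k, t ∈ Ico (S.τ k) (S.τ (k + 1)) := by
  have hex : ∃ m, t < S.τ m := (S.τ_unbounded.eventually_gt_atTop t).exists
  obtain ⟨k, hk⟩ : ∃ k, Nat.find hex = k + 1 := Nat.exists_eq_succ_of_ne_zero fun h => by
    have := Nat.find_spec hex
    rw [h, S.τ_zero] at this
    linarith
  exact ⟨k, not_lt.1 (Nat.find_min hex (by omega)), hk ▸ Nat.find_spec hex⟩

theorem natCast_le_of_τ_le (hτd : 0 < τd) {k : ℕ} {t : ℝ} (hk : S.τ k ≤ t) :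
    (k : ℝ) ≤ N₀ + t / τd := by
  have := S.adt 0 k
  rw [zero_add, S.τ_zero, sub_zero] at this
  exact this.trans (by gcongr)

variable {E : Type*} [NormedAddCommGroup E] [NormedSpace ℝ E]
  {V : Fin n₀ → E → ℝ} {x v : ℝ → E} {lam μ : ℝ}

theorem apply_le_mul_exp_of_mem_Icc (hV : ∀ p, Differentiable ℝ (V p))
    (hx : ∀ t, 0 ≤ t → HasDerivAt x (v t) t)
    (hdecay : ∀ t, 0 ≤ t → fderiv ℝ (V (S.σ t)) (x t) (v t) ≤ -lam * V (S.σ t) (x t))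
    (k : ℕ) {t : ℝ} (ht : t ∈ Icc (S.τ k) (S.τ (k + 1))) :
    V (S.σ (S.τ k)) (x t) ≤ V (S.σ (S.τ k)) (x (S.τ k)) * exp (-lam * (t - S.τ k)) := by
  refine le_mul_exp_of_fderiv_le (hV _) (fun s hs => hx s ((S.τ_nonneg k).trans hs.1))
    (fun s hs => ?_) ht
  rw [← S.piecewise k s hs]
  exact hdecay s ((S.τ_nonneg k).trans hs.1)

theorem apply_le_pow_mul_exp (hV : ∀ p, Differentiable ℝ (V p)) (hμ : 0 ≤ μ)
    (hjump : ∀ p q y, V q y ≤ μ * V p y) (hx : ∀ t, 0 ≤ t → HasDerivAt x (v t) t)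
    (hdecay : ∀ t, 0 ≤ t → fderiv ℝ (V (S.σ t)) (x t) (v t) ≤ -lam * V (S.σ t) (x t))
    (k : ℕ) {t : ℝ} (ht : t ∈ Icc (S.τ k) (S.τ (k + 1))) :
    V (S.σ (S.τ k)) (x t) ≤ μ ^ k * exp (-lam * t) * V (S.σ 0) (x 0) := by
  induction k generalizing t with
  | zero =>
    simpa [S.τ_zero, mul_comm] using S.apply_le_mul_exp_of_mem_Icc hV hx hdecay 0 ht
  | succ k ih =>
    have hswitch := ih ⟨S.τ_mono.monotone k.le_succ, le_rfl⟩
    have hexp :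
        exp (-lam * S.τ (k + 1)) * exp (-lam * (t - S.τ (k + 1))) = exp (-lam * t) := by
      rw [← exp_add]
      ring_nf
    calc V (S.σ (S.τ (k + 1))) (x t)
        ≤ V (S.σ (S.τ (k + 1))) (x (S.τ (k + 1))) * exp (-lam * (t - S.τ (k + 1))) :=
          S.apply_le_mul_exp_of_mem_Icc hV hx hdecay (k + 1) ht
      _ ≤ μ * (μ ^ k * exp (-lam * S.τ (k + 1)) * V (S.σ 0) (x 0)) *
            exp (-lam * (t - S.τ (k + 1))) := by
          gcongr
          exact (hjump _ _ _).trans (mul_le_mul_of_nonneg_left hswitch hμ)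
      _ = μ ^ (k + 1) * exp (-lam * t) * V (S.σ 0) (x 0) := by
          rw [← hexp]
          ring

theorem apply_le_exp_mul_exp (hτd : 0 < τd) (hV : ∀ p, Differentiable ℝ (V p))
    (hV₀ : ∀ p y, 0 ≤ V p y) (hμ : 1 ≤ μ) (hjump : ∀ p q y, V q y ≤ μ * V p y)
    (hx : ∀ t, 0 ≤ t → HasDerivAt x (v t) t)
    (hdecay : ∀ t, 0 ≤ t → fderiv ℝ (V (S.σ t)) (x t) (v t) ≤ -lam * V (S.σ t) (x t))
    {t : ℝ} (ht : 0 ≤ t) :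
    V (S.σ t) (x t) ≤
      exp (N₀ * log μ) * exp (-(lam - log μ / τd) * t) * V (S.σ 0) (x 0) := by
  obtain ⟨k, hk⟩ := S.exists_mem_Ico ht
  have hμk : μ ^ k ≤ exp ((N₀ + t / τd) * log μ) := by
    rw [← exp_log (pow_pos (by linarith) k), log_pow]
    gcongr
    · exact log_nonneg hμ
    · exact S.natCast_le_of_τ_le hτd hk.1
  calc V (S.σ t) (x t) = V (S.σ (S.τ k)) (x t) := by rw [S.piecewise k t hk]
    _ ≤ μ ^ k * exp (-lam * t) * V (S.σ 0) (x 0) :=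
      S.apply_le_pow_mul_exp hV (by linarith) hjump hx hdecay k (Ico_subset_Icc_self hk)
    _ ≤ exp ((N₀ + t / τd) * log μ) * exp (-lam * t) * V (S.σ 0) (x 0) := by
      gcongr
      exact hV₀ _ _
    _ = _ := by
      rw [← exp_add, ← exp_add]
      ring_nf

end SwitchSignal

theorem stmt16_general {n nd n₀ : ℕ}
    (𝔻 : Set (EuclideanSpace ℝ (Fin nd)))
    (f : Fin n₀ → EuclideanSpace ℝ (Fin n) → EuclideanSpace ℝ (Fin nd) →
      EuclideanSpace ℝ (Fin n))
    (U : Fin n₀ → EuclideanSpace ℝ (Fin n) → ℝ)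
    (hU_C1 : ∀ p, ContDiff ℝ 1 (U p))
    (α₁ α₂ : ℝ → ℝ) (hα₁ : ClassKInf α₁) (hα₂ : ClassKInf α₂)
    (hsand : ∀ p x, α₁ ‖x‖ ≤ U p x ∧ U p x ≤ α₂ ‖x‖)
    (lam₀ : ℝ) (hlam₀ : 0 < lam₀)
    (hdecay : ∀ p x d, d ∈ 𝔻 → fderiv ℝ (U p) x (f p x d) ≤ -lam₀ * U p x)
    -- μ₀ := sup_{x ≠ 0} α₂(‖x‖)/α₁(‖x‖) < ∞
    (μ₀ : ℝ) (hμ₀_bdd : ∀ s, 0 < s → α₂ s ≤ μ₀ * α₁ s)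
    (τd N₀ : ℝ) (hτd_pos : 0 < τd) (hτd : Real.log μ₀ / lam₀ < τd) :
    -- uniform (Lyapunov) stability
    (∀ ε > 0, ∃ δ > 0, ∀ (S : SwitchSignal n₀ τd N₀)
      (d : ℝ → EuclideanSpace ℝ (Fin nd)) (x : ℝ → EuclideanSpace ℝ (Fin n)),
      (∀ t, 0 ≤ t → d t ∈ 𝔻) →
      (∀ t, 0 ≤ t → HasDerivAt x (f (S.σ t) (x t) (d t)) t) →
      ‖x 0‖ < δ → ∀ t, 0 ≤ t → ‖x t‖ < ε) ∧
    -- global attractivity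
    (∀ (S : SwitchSignal n₀ τd N₀)
      (d : ℝ → EuclideanSpace ℝ (Fin nd)) (x : ℝ → EuclideanSpace ℝ (Fin n)),
      (∀ t, 0 ≤ t → d t ∈ 𝔻) →
      (∀ t, 0 ≤ t → HasDerivAt x (f (S.σ t) (x t) (d t)) t) →
      Filter.Tendsto x Filter.atTop (nhds 0)) := by
  set μ := max μ₀ 1 with hμ
  have hrate : 0 < lam₀ - log μ / τd := by
    rw [sub_pos, div_lt_iff₀ hτd_pos]
    rcases le_total μ₀ 1 with h | h
    · rw [hμ, max_eq_right h, log_one]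
      positivity
    · rw [hμ, max_eq_left h]
      exact (div_lt_iff₀' hlam₀).1 hτd
  have hjump : ∀ p q y, U q y ≤ μ * U p y := fun p q y =>
    calc U q y ≤ α₂ ‖y‖ := (hsand q y).2
      _ ≤ μ * α₁ ‖y‖ := hα₁.le_mul_of_le hα₂ hμ₀_bdd (le_max_left _ _) (norm_nonneg y)
      _ ≤ μ * U p y := by gcongr; exact (hsand p y).1
  have hbound : ∀ (S : SwitchSignal n₀ τd N₀) (d : ℝ → EuclideanSpace ℝ (Fin nd))
      (x : ℝ → EuclideanSpace ℝ (Fin n)), (∀ t, 0 ≤ t → d t ∈ 𝔻) →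
      (∀ t, 0 ≤ t → HasDerivAt x (f (S.σ t) (x t) (d t)) t) → ∀ t, 0 ≤ t →
      α₁ ‖x t‖ ≤ exp (N₀ * log μ) * exp (-(lam₀ - log μ / τd) * t) * α₂ ‖x 0‖ := by
    intro S d x hd hx t ht
    calc α₁ ‖x t‖ ≤ U (S.σ t) (x t) := (hsand _ _).1
      _ ≤ exp (N₀ * log μ) * exp (-(lam₀ - log μ / τd) * t) * U (S.σ 0) (x 0) :=
        S.apply_le_exp_mul_exp hτd_pos (fun p => (hU_C1 p).differentiable one_ne_zero)
          (fun p y => (hα₁.nonneg (norm_nonneg y)).trans (hsand p y).1) (le_max_right _ _)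
          hjump hx (fun s hs => hdecay _ _ _ (hd s hs)) ht
      _ ≤ _ := by gcongr; exact (hsand _ _).2
  refine ⟨fun ε hε => ?_, fun S d x hd hx => hα₁.tendsto_zero_of_le hrate (hbound S d x hd hx)⟩
  obtain ⟨δ, hδ, hstable⟩ := hα₁.exists_pos_forall_norm_lt_of_le
    (E := EuclideanSpace ℝ (Fin n)) hα₂ (exp_pos _).le hrate.le hε
  exact ⟨δ, hδ, fun S d x hd hx => hstable x (hbound S d x hd hx)⟩

theorem stmt16 {n nd n₀ : ℕ}
    (𝔻 : Set (EuclideanSpace ℝ (Fin nd))) (h𝔻 : IsCompact 𝔻)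
    (f : Fin n₀ → EuclideanSpace ℝ (Fin n) → EuclideanSpace ℝ (Fin nd) →
      EuclideanSpace ℝ (Fin n))
    (hf_lip : ∀ p d, d ∈ 𝔻 → LocallyLipschitz (fun x => f p x d))
    (hf0 : ∀ p d, d ∈ 𝔻 → f p 0 d = 0)
    (U : Fin n₀ → EuclideanSpace ℝ (Fin n) → ℝ)
    (hU_C1 : ∀ p, ContDiff ℝ 1 (U p))
    (α₁ α₂ : ℝ → ℝ) (hα₁ : ClassKInf α₁) (hα₂ : ClassKInf α₂)
    (hsand : ∀ p x, α₁ ‖x‖ ≤ U p x ∧ U p x ≤ α₂ ‖x‖)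
    (lam₀ : ℝ) (hlam₀ : 0 < lam₀)
    (hdecay : ∀ p x d, d ∈ 𝔻 → fderiv ℝ (U p) x (f p x d) ≤ -lam₀ * U p x)
    -- μ₀ := sup_{x ≠ 0} α₂(‖x‖)/α₁(‖x‖) < ∞
    (μ₀ : ℝ) (hμ₀_bdd : ∀ s, 0 < s → α₂ s ≤ μ₀ * α₁ s)
    (τd N₀ : ℝ) (hτd_pos : 0 < τd) (hτd : Real.log μ₀ / lam₀ < τd) :
    -- uniform (Lyapunov) stability
    (∀ ε > 0, ∃ δ > 0, ∀ (S : SwitchSignal n₀ τd N₀)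
      (d : ℝ → EuclideanSpace ℝ (Fin nd)) (x : ℝ → EuclideanSpace ℝ (Fin n)),
      (∀ t, 0 ≤ t → d t ∈ 𝔻) →
      (∀ t, 0 ≤ t → HasDerivAt x (f (S.σ t) (x t) (d t)) t) →
      ‖x 0‖ < δ → ∀ t, 0 ≤ t → ‖x t‖ < ε) ∧
    -- global attractivity
    (∀ (S : SwitchSignal n₀ τd N₀)
      (d : ℝ → EuclideanSpace ℝ (Fin nd)) (x : ℝ → EuclideanSpace ℝ (Fin n)),
      (∀ t, 0 ≤ t → d t ∈ 𝔻) →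
      (∀ t, 0 ≤ t → HasDerivAt x (f (S.σ t) (x t) (d t)) t) →
      Filter.Tendsto x Filter.atTop (nhds 0)) :=
  stmt16_general 𝔻 f U hU_C1 α₁ α₂ hα₁ hα₂ hsand lam₀ hlam₀ hdecay μ₀ hμ₀_bdd τd N₀ hτd_pos hτd
end
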